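/- arXiv:1102.3499 — 7 statements merged into one kernel-verified Lean document; each statement's English description precedes it below -/
import Mathlib

section
/- Let x̄ be a binary feasible solution to P(k), i.e., x̄ ∈ {0,1}^n with A x̄ = k b. Then there exist k binary feasible solutions x̄¹, …, x̄ᵏ to P(1) (i.e., each x̄ⁱ ∈ {0,1}^n with A x̄ⁱ = b) such that x̄ = x̄¹ + ⋯ + x̄ᵏ. -/
open Matrix Set

/-- Feasibility for the linear program `P(λ)`: `A x = λ b` and `0 ≤ x ≤ 1`. -/
def PFeasible {m n : ℕ} (A : Matrix (Fin m) (Fin n) ℝ) (b : Fin m → ℝ)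
    (lam : ℝ) (x : Fin n → ℝ) : Prop :=
  A.mulVec x = lam • b ∧ ∀ j, 0 ≤ x j ∧ x j ≤ 1

/-- A vector is binary if each coordinate is `0` or `1`. -/
def IsBinary {n : ℕ} (x : Fin n → ℝ) : Prop := ∀ j, x j = 0 ∨ x j = 1

/-- Optimality for `P(λ)` with objective vector `c`. -/
def POptimal {m n : ℕ} (A : Matrix (Fin m) (Fin n) ℝ) (b : Fin m → ℝ) (c : Fin n → ℝ)
    (lam : ℝ) (x : Fin n → ℝ) : Prop :=
  PFeasible A b lam x ∧ ∀ x', PFeasible A b lam x' → c ⬝ᵥ x ≤ c ⬝ᵥ x'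

/-- `φ(λ)`, the optimal value of `P(λ)`. -/
noncomputable def phi {m n : ℕ} (A : Matrix (Fin m) (Fin n) ℝ) (b : Fin m → ℝ)
    (c : Fin n → ℝ) (lam : ℝ) : ℝ :=
  sInf ((fun x => c ⬝ᵥ x) '' {x | PFeasible A b lam x})

/-- The augmented matrix `(A | b)` is totally unimodular. -/
def AugTU {m n : ℕ} (A : Matrix (Fin m) (Fin n) ℝ) (b : Fin m → ℝ) : Prop :=
  (Matrix.fromCols A (Matrix.of fun i (_ : Unit) => b i)).IsTotallyUnimodular


def IsIntR (v : ℝ) : Prop := ∃ z : ℤ, (z : ℝ) = v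

lemma isIntR_of_sign {v : ℝ} (h : v ∈ Set.range (SignType.cast : SignType → ℝ)) : IsIntR v := by
  obtain ⟨s, rfl⟩ := h
  exact ⟨(s : ℤ), by cases s <;> simp⟩

lemma IsIntR.mul {a b : ℝ} (ha : IsIntR a) (hb : IsIntR b) : IsIntR (a * b) := by
  obtain ⟨x, rfl⟩ := ha; obtain ⟨y, rfl⟩ := hb; exact ⟨x * y, by push_cast; ring⟩

lemma IsIntR.sub {a b : ℝ} (ha : IsIntR a) (hb : IsIntR b) : IsIntR (a - b) := by
  obtain ⟨x, rfl⟩ := ha; obtain ⟨y, rfl⟩ := hb; exact ⟨x - y, by push_cast; ring⟩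

lemma isIntR_sum {ι : Type*} (s : Finset ι) (f : ι → ℝ) (h : ∀ i ∈ s, IsIntR (f i)) :
    IsIntR (∑ i ∈ s, f i) := by
  classical
  induction s using Finset.induction_on with
  | empty => exact ⟨0, by simp⟩
  | insert a s hni ih =>
    rw [Finset.sum_insert hni]
    obtain ⟨x, hx⟩ := h a (Finset.mem_insert_self a s)
    obtain ⟨y, hy⟩ := ih (fun i hi => h i (Finset.mem_insert_of_mem hi))
    exact ⟨x + y, by push_cast [hx, hy]; ring⟩

lemma isIntR_det {ι : Type*} [Fintype ι] [DecidableEq ι] (C : Matrix ι ι ℝ)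
    (h : ∀ i j, IsIntR (C i j)) : IsIntR C.det := by
  choose Z hZ using h
  refine ⟨(Matrix.of Z).det, ?_⟩
  have : C = (Matrix.of Z).map (Int.cast : ℤ → ℝ) := by
    ext i j; simp [hZ i j]
  rw [this]
  have := RingHom.map_det (Int.castRingHom ℝ) (Matrix.of Z)
  simpa [Matrix.map, RingHom.mapMatrix] using this

lemma exists_invertible_row_select {m : ℕ} {ι : Type} [Fintype ι] [DecidableEq ι]
    (M : Matrix (Fin m) ι ℝ) (h : LinearIndependent ℝ Mᵀ) :
    ∃ r : ι → Fin m, Function.Injective r ∧ IsUnit (M.submatrix r id) := by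
  classical
  have hrank : M.rank = Fintype.card ι := by
    have := h.rank_matrix
    rwa [show (Matrix.of fun x y => M y x) = Mᵀ from rfl, Matrix.rank_transpose] at this
  have hspan : Submodule.span ℝ (Set.range M) = ⊤ := by
    apply Submodule.eq_top_of_finrank_eq
    change Module.finrank ℝ (Submodule.span ℝ (Set.range M.row)) = _
    rw [← Matrix.rank_eq_finrank_span_row, hrank, Module.finrank_fintype_fun_eq_card]
  obtain ⟨bset, hbsub, hbspan, hbli⟩ := exists_linearIndependent ℝ (Set.range M)
  rw [hspan] at hbspan
  have hfin : bset.Finite := hbli.finite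
  have : Fintype bset := hfin.fintype
  let B : Module.Basis bset ℝ (ι → ℝ) := Module.Basis.mk hbli (by rw [Subtype.range_coe, hbspan])
  have hcard : Fintype.card ι = Fintype.card bset := by
    rw [← Module.finrank_fintype_fun_eq_card ℝ, Module.finrank_eq_card_basis B]
  let e : ι ≃ bset := Fintype.equivOfCardEq hcard
  have hex : ∀ x : bset, ∃ i : Fin m, M i = (x : ι → ℝ) := fun x => hbsub x.2
  choose pick hpick using hex
  refine ⟨fun j => pick (e j), ?_, ?_⟩
  · intro j1 j2 hj
    apply e.injective
    apply Subtype.ext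
    simp only at hj
    rw [← hpick (e j1), ← hpick (e j2), hj]
  · rw [← Matrix.linearIndependent_rows_iff_isUnit]
    show LinearIndependent ℝ (fun j : ι => (M.submatrix (fun j => pick (e j)) id) j)
    have hli2 : LinearIndependent ℝ (fun j : ι => ((e j : bset) : ι → ℝ)) :=
      hbli.comp e e.injective
    convert hli2 with j
    ext q
    simp [Matrix.submatrix, hpick (e j)]

lemma key_lemma {m n : ℕ} (A : Matrix (Fin m) (Fin n) ℝ) (b : Fin m → ℝ) (hTU : AugTU A b)
    (xbar : Fin n → ℝ) (hxb : IsBinary xbar) :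
    ∀ N : ℕ, ∀ x : Fin n → ℝ,
      (Finset.univ.filter (fun j => x j ≠ 0 ∧ x j ≠ 1)).card ≤ N →
      A.mulVec x = b → (∀ j, 0 ≤ x j ∧ x j ≤ xbar j) →
      ∃ y : Fin n → ℝ, IsBinary y ∧ A.mulVec y = b ∧ ∀ j, y j ≤ xbar j := by
  classical
  have hAint : ∀ i j, IsIntR (A i j) := by
    intro i j
    have := hTU.apply i (Sum.inl j)
    apply isIntR_of_sign
    simpa [Matrix.fromCols] using this
  have hbint : ∀ i, IsIntR (b i) := by
    intro i
    have := hTU.apply i (Sum.inr ())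
    apply isIntR_of_sign
    simpa [Matrix.fromCols] using this
  have hxbar01 : ∀ j, 0 ≤ xbar j ∧ xbar j ≤ 1 := by
    intro j; rcases hxb j with h | h <;> simp [h]
  intro N
  induction N with
  | zero =>
    intro x hcard hAx hbd
    refine ⟨x, ?_, hAx, fun j => (hbd j).2⟩
    intro j
    by_contra hj
    push_neg at hj
    have : j ∈ Finset.univ.filter (fun j => x j ≠ 0 ∧ x j ≠ 1) := by
      simp [hj.1, hj.2]
    have := Finset.card_pos.mpr ⟨j, this⟩
    omega
  | succ N ih =>
    intro x hcard hAx hbd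
    set F := Finset.univ.filter (fun j => x j ≠ 0 ∧ x j ≠ 1) with hFdef
    by_cases hFne : F.Nonempty
    swap
    · refine ⟨x, ?_, hAx, fun j => (hbd j).2⟩
      intro j
      by_contra hj
      push_neg at hj
      exact hFne ⟨j, by simp [hFdef, hj.1, hj.2]⟩
    -- facts about fractional coordinates
    have hfrac : ∀ j ∈ F, 0 < x j ∧ x j < 1 := by
      intro j hj
      simp only [hFdef, Finset.mem_filter] at hj
      constructor
      · exact lt_of_le_of_ne (hbd j).1 (Ne.symm hj.2.1)
      · exact lt_of_le_of_ne ((hbd j).2.trans (hxbar01 j).2) hj.2.2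
    have hxbarF : ∀ j ∈ F, xbar j = 1 := by
      intro j hj
      rcases hxb j with h | h
      · exfalso
        have := (hbd j).2
        have := (hfrac j hj).1
        rw [h] at *
        linarith
      · exact h
    by_cases hLI : LinearIndependent ℝ (fun q : {j // j ∈ F} => (fun i => A i q.1 : Fin m → ℝ))
    · -- independent case: x is integral on F, contradiction
      exfalso
      set M : Matrix (Fin m) {j // j ∈ F} ℝ := Matrix.of fun i q => A i q.1 with hMdef
      have hMt : LinearIndependent ℝ Mᵀ := hLI
      obtain ⟨r, hrinj, hU⟩ := exists_invertible_row_select M hMt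
      set B : Matrix {j // j ∈ F} {j // j ∈ F} ℝ := M.submatrix r id with hBdef
      have hdetsign : B.det ∈ Set.range (SignType.cast : SignType → ℝ) := by
        have h := (Matrix.isTotallyUnimodular_iff_fintype _).mp hTU
          {j // j ∈ F} r (fun q => Sum.inl q.1)
        have heq : (Matrix.fromCols A (Matrix.of fun i (_ : Unit) => b i)).submatrix r
            (fun q : {j // j ∈ F} => Sum.inl q.1) = B := by
          ext p q
          simp [hBdef, hMdef, Matrix.fromCols]
        rwa [heq] at h
      have hUd : IsUnit B.det := (Matrix.isUnit_iff_isUnit_det B).mp hU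
      have hdet : B.det = 1 ∨ B.det = -1 := by
        obtain ⟨s, hs⟩ := hdetsign
        cases s with
        | zero => exfalso; rw [← hs] at hUd; simp at hUd
        | pos => left; rw [← hs]; simp
        | neg => right; rw [← hs]; simp
      set d : {j // j ∈ F} → ℝ :=
        fun p => b (r p) - ∑ j ∈ Finset.univ \ F, A (r p) j * x j with hddef
      have hdint : ∀ p, IsIntR (d p) := by
        intro p
        apply (hbint (r p)).sub
        apply isIntR_sum
        intro j hj
        apply (hAint (r p) j).mul
        rw [Finset.mem_sdiff] at hj
        have hx01 : x j = 0 ∨ x j = 1 := by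
          by_contra hc
          push_neg at hc
          exact hj.2 (by simp [hFdef, hc.1, hc.2])
        rcases hx01 with h | h <;> rw [h]
        exacts [⟨0, by simp⟩, ⟨1, by simp⟩]
      have hBx : B.mulVec (fun q => x q.1) = d := by
        funext p
        simp only [Matrix.mulVec, dotProduct, hBdef, Matrix.submatrix_apply, id,
          hMdef, Matrix.of_apply, hddef]
        have hbrp := congrFun hAx (r p)
        simp only [Matrix.mulVec, dotProduct] at hbrp
        rw [Finset.sum_coe_sort F (fun j => A (r p) j * x j)]
        have htot := Finset.sum_sdiff (f := fun j => A (r p) j * x j) (Finset.subset_univ F)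
        linarith
      have hsol : B.mulVec (B.det • (B.cramer d)) = d := by
        rw [Matrix.mulVec_smul, Matrix.mulVec_cramer]
        rcases hdet with h | h <;> rw [h] <;> funext p <;> simp
      have hinj : Function.Injective B.mulVec := Matrix.mulVec_injective_iff_isUnit.mpr hU
      have hxF : (fun q : {j // j ∈ F} => x q.1) = B.det • (B.cramer d) :=
        hinj (hBx.trans hsol.symm)
      obtain ⟨j1, hj1⟩ := hFne
      have hint : IsIntR (x j1) := by
        have hx1 : x j1 = B.det * (B.cramer d ⟨j1, hj1⟩) := by
          have := congrFun hxF ⟨j1, hj1⟩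
          simpa [Pi.smul_apply, smul_eq_mul] using this
        rw [hx1]
        refine IsIntR.mul ?_ ?_
        · rcases hdet with h | h <;> rw [h]
          exacts [⟨1, by simp⟩, ⟨-1, by simp⟩]
        · rw [Matrix.cramer_apply]
          apply isIntR_det
          intro p q
          rw [Matrix.updateCol_apply]
          split
          · exact hdint p
          · exact hAint (r p) q.1
      obtain ⟨zz, hzz⟩ := hint
      have hf := hfrac j1 hj1
      have h1 : (0:ℤ) < zz := by
        have : (0:ℝ) < (zz:ℝ) := by rw [hzz]; exact hf.1
        exact_mod_cast this
      have h2 : zz < 1 := by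
        have : (zz:ℝ) < 1 := by rw [hzz]; exact hf.2
        exact_mod_cast this
      omega
    · -- dependent case: move along kernel direction
      obtain ⟨g, hg, q0, hgq0⟩ := Fintype.not_linearIndependent_iff.mp hLI
      set z : Fin n → ℝ := fun j => if h : j ∈ F then g ⟨j, h⟩ else 0 with hzdef
      have hAz : A.mulVec z = 0 := by
        funext i
        simp only [Matrix.mulVec, dotProduct, Pi.zero_apply]
        have hsplit : ∑ j, A i j * z j = ∑ j ∈ F, A i j * z j := by
          symm
          apply Finset.sum_subset (Finset.subset_univ F)
          intro j _ hjF
          simp [hzdef, hjF]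
        rw [hsplit, ← Finset.sum_coe_sort F (fun j => A i j * z j)]
        have hterm : ∀ q : {j // j ∈ F}, A i q.1 * z q.1 = g q * A i q.1 := by
          intro q
          simp [hzdef, q.2, mul_comm]
        rw [Finset.sum_congr rfl (fun q _ => hterm q)]
        simpa [Finset.sum_apply, Pi.smul_apply, smul_eq_mul] using congrFun hg i
      set S := Finset.univ.filter (fun j => z j ≠ 0) with hSdef
      have hSne : S.Nonempty := ⟨q0.1, by simp [hSdef, hzdef, q0.2, hgq0]⟩
      have hSF : ∀ j ∈ S, j ∈ F := by
        intro j hj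
        simp only [hSdef, Finset.mem_filter] at hj
        by_contra hjF
        exact hj.2 (by simp [hzdef, hjF])
      set step : Fin n → ℝ := fun j => if 0 < z j then (1 - x j) / z j else x j / (-z j)
        with hstepdef
      have hstep_pos : ∀ j ∈ S, 0 < step j := by
        intro j hj
        have hz : z j ≠ 0 := by simpa [hSdef] using hj
        have hf := hfrac j (hSF j hj)
        rcases lt_or_gt_of_ne hz with hneg | hpos
        · rw [hstepdef]
          simp only [if_neg (not_lt.mpr hneg.le)]
          exact div_pos hf.1 (by linarith)
        · rw [hstepdef]
          simp only [if_pos hpos]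
          exact div_pos (by linarith [hf.2]) hpos
      obtain ⟨j0, hj0S, hj0min⟩ := S.exists_min_image step hSne
      set t := step j0 with htdef
      have ht : 0 < t := hstep_pos j0 hj0S
      set x' : Fin n → ℝ := fun j => x j + t * z j with hx'def
      have hx'A : A.mulVec x' = b := by
        have : x' = x + t • z := by funext j; simp [hx'def, mul_comm]
        rw [this, Matrix.mulVec_add, Matrix.mulVec_smul, hAz, hAx]
        simp
      -- bounds on x'
      have hb1 : ∀ j, 0 < z j → x' j ≤ 1 := by
        intro j hzj
        have hjS : j ∈ S := by simp [hSdef, ne_of_gt hzj]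
        have : t ≤ step j := hj0min j hjS
        have hstepj : step j = (1 - x j) / z j := by simp [hstepdef, if_pos hzj]
        have : t * z j ≤ 1 - x j := by
          calc t * z j ≤ step j * z j := by nlinarith
          _ = 1 - x j := by rw [hstepj]; field_simp
        simp only [hx'def]; linarith
      have hb2 : ∀ j, z j < 0 → 0 ≤ x' j := by
        intro j hzj
        have hjS : j ∈ S := by simp [hSdef, ne_of_lt hzj]
        have htle : t ≤ step j := hj0min j hjS
        have hstepj : step j = x j / (-z j) := by
          simp [hstepdef, if_neg (not_lt.mpr hzj.le)]
        have : -(t * z j) ≤ x j := by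
          have : t * (-z j) ≤ step j * (-z j) := by nlinarith
          have h2 : step j * (-z j) = x j := by
            rw [hstepj]; exact div_mul_cancel₀ _ (by linarith)
          linarith [this, h2]
        simp only [hx'def]; linarith
      have hbd' : ∀ j, 0 ≤ x' j ∧ x' j ≤ xbar j := by
        intro j
        rcases lt_trichotomy (z j) 0 with hz | hz | hz
        · have hjS : j ∈ S := by simp [hSdef, ne_of_lt hz]
          refine ⟨hb2 j hz, ?_⟩
          have : x' j ≤ x j := by
            simp only [hx'def]; nlinarith
          exact this.trans (hbd j).2
        · have : x' j = x j := by simp [hx'def, hz]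
          rw [this]; exact hbd j
        · have hjS : j ∈ S := by simp [hSdef, ne_of_gt hz]
          constructor
          · have : x j ≤ x' j := by simp only [hx'def]; nlinarith
            exact (hbd j).1.trans this
          · rw [hxbarF j (hSF j hjS)]
            exact hb1 j hz
      -- j0 becomes integral
      have hj0int : x' j0 = 0 ∨ x' j0 = 1 := by
        have hz0 : z j0 ≠ 0 := by simpa [hSdef] using hj0S
        rcases lt_or_gt_of_ne hz0 with hneg | hpos
        · left
          have hstepj : t = x j0 / (-z j0) := by
            simp [htdef, hstepdef, if_neg (not_lt.mpr hneg.le)]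
          have hne : -z j0 ≠ 0 := by linarith
          simp only [hx'def, hstepj]
          field_simp
          ring
        · right
          have hstepj : t = (1 - x j0) / z j0 := by
            simp [htdef, hstepdef, if_pos hpos]
          simp only [hx'def, hstepj]
          field_simp
          ring
      -- new fractional set shrinks
      have hsub : Finset.univ.filter (fun j => x' j ≠ 0 ∧ x' j ≠ 1) ⊆ F.erase j0 := by
        intro j hj
        simp only [Finset.mem_filter] at hj
        rw [Finset.mem_erase]
        constructor
        · rintro rfl
          rcases hj0int with h | h
          · exact hj.2.1 h
          · exact hj.2.2 h
        · by_contra hjF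
          have hzj : z j = 0 := by simp [hzdef, hjF]
          have : x' j = x j := by simp [hx'def, hzj]
          rw [this] at hj
          have : j ∈ F := by simp [hFdef, hj.2.1, hj.2.2]
          exact hjF this
      have hcard' : (Finset.univ.filter (fun j => x' j ≠ 0 ∧ x' j ≠ 1)).card ≤ N := by
        have h1 := Finset.card_le_card hsub
        have h2 : (F.erase j0).card = F.card - 1 :=
          Finset.card_erase_of_mem (hSF j0 hj0S)
        have h3 : 0 < F.card := Finset.card_pos.mpr hFne
        omega
      exact ih x' hcard' hx'A hbd'

lemma decomp {m n : ℕ} (A : Matrix (Fin m) (Fin n) ℝ) (b : Fin m → ℝ) (hTU : AugTU A b) :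
    ∀ k : ℕ, ∀ xbar : Fin n → ℝ, IsBinary xbar →
      A.mulVec xbar = ((k : ℝ) + 1) • b →
      ∃ xs : Fin (k + 1) → (Fin n → ℝ),
        (∀ i, IsBinary (xs i) ∧ PFeasible A b 1 (xs i)) ∧ xbar = ∑ i, xs i := by
  intro k
  induction k with
  | zero =>
    intro xbar hbin hAx
    refine ⟨fun _ => xbar, ?_, ?_⟩
    · intro i
      refine ⟨hbin, ?_, ?_⟩
      · rw [hAx]; norm_num
      · intro j; rcases hbin j with h | h <;> simp [h]
    · simp
  | succ k ih =>
    intro xbar hbin hAx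
    push_cast at hAx
    have hpos : (0:ℝ) < (k:ℝ) + 1 + 1 := by positivity
    have hxfeas : A.mulVec (((k:ℝ) + 1 + 1)⁻¹ • xbar) = b := by
      rw [Matrix.mulVec_smul, hAx, smul_smul, inv_mul_cancel₀ (ne_of_gt hpos), one_smul]
    have hbd : ∀ j, 0 ≤ (((k:ℝ) + 1 + 1)⁻¹ • xbar) j ∧
        (((k:ℝ) + 1 + 1)⁻¹ • xbar) j ≤ xbar j := by
      intro j
      have h0 : 0 ≤ xbar j := by rcases hbin j with h | h <;> simp [h]
      have hinv : 0 < ((k:ℝ) + 1 + 1)⁻¹ := by positivity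
      have hinv1 : ((k:ℝ) + 1 + 1)⁻¹ ≤ 1 := by
        rw [inv_le_one_iff₀]; right; linarith
      constructor
      · simp only [Pi.smul_apply, smul_eq_mul]; positivity
      · simp only [Pi.smul_apply, smul_eq_mul]; nlinarith
    obtain ⟨y, hybin, hyA, hyle⟩ := key_lemma A b hTU xbar hbin n
      (((k:ℝ) + 1 + 1)⁻¹ • xbar)
      ((Finset.card_filter_le _ _).trans (by simp)) hxfeas hbd
    have hbin' : IsBinary (xbar - y) := by
      intro j
      rcases hbin j with h | h <;> rcases hybin j with h' | h'
      · left; simp [h, h']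
      · exfalso; have := hyle j; rw [h, h'] at this; linarith
      · right; simp [h, h']
      · left; simp [h, h']
    have hA' : A.mulVec (xbar - y) = ((k:ℝ) + 1) • b := by
      rw [Matrix.mulVec_sub, hAx, hyA]
      funext i
      simp only [Pi.sub_apply, Pi.smul_apply, smul_eq_mul]
      ring
    obtain ⟨xs', hxs', hsum⟩ := ih (xbar - y) hbin' hA'
    refine ⟨Fin.cons y xs', ?_, ?_⟩
    · intro i
      refine Fin.cases ?_ ?_ i
      · refine ⟨by simpa using hybin, ?_, ?_⟩
        · simpa using hyA.trans (one_smul ℝ b).symm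
        · intro j
          rcases hybin j with h | h <;> simp [h]
      · intro i'
        simpa using hxs' i'
    · rw [Fin.sum_cons, ← hsum]
      funext j
      simp

/-- Integral decomposition (Baum–Trotter variant): a binary feasible solution of `P(k)`
decomposes into `k` binary feasible solutions of `P(1)`. -/
theorem stmt_0 {m n : ℕ} (A : Matrix (Fin m) (Fin n) ℝ) (b : Fin m → ℝ) (c : Fin n → ℝ)
    (hb : b ≠ 0) (hc : ∀ j, 0 ≤ c j) (hTU : AugTU A b)
    (k : ℕ) (hk : 0 < k)
    (xbar : Fin n → ℝ) (hbin : IsBinary xbar) (hfeas : PFeasible A b (k : ℝ) xbar) :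
    ∃ xs : Fin k → (Fin n → ℝ),
      (∀ i, IsBinary (xs i) ∧ PFeasible A b 1 (xs i)) ∧ xbar = ∑ i, xs i := by
  obtain ⟨k', rfl⟩ : ∃ k', k = k' + 1 := ⟨k - 1, by omega⟩
  have hAx : A.mulVec xbar = ((k' : ℝ) + 1) • b := by
    rw [hfeas.1]; push_cast; ring_nf
  exact decomp A b hTU k' xbar hbin hAx
end

section
/- Let m₀ be a nonnegative integer such that both P(m₀) and P(m₀+1) are feasible. Then P(λ) is feasible for every real λ ∈ [m₀, m₀+1], and there exist real numbers h and g such that φ(λ) = h + g·λ for all λ ∈ [m₀, m₀+1]. (That is, all breakpoints of the piecewise linear convex value function φ occur at integers.) -/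
open Matrix Set

namespace StmtAux



def IntVec {k : ℕ} (v : Fin k → ℝ) : Prop := ∀ j, ∃ z : ℤ, v j = (z : ℝ)

variable {m k : ℕ}

def Poly (M : Matrix (Fin m) (Fin k) ℝ) (lo hi : Fin k → ℤ) : Set (Fin k → ℝ) :=
  {p | M.mulVec p = 0 ∧ ∀ j, (lo j : ℝ) ≤ p j ∧ p j ≤ (hi j : ℝ)}

lemma convex_poly (M : Matrix (Fin m) (Fin k) ℝ) (lo hi : Fin k → ℤ) :
    Convex ℝ (Poly M lo hi) := by
  intro x hx y hy a b ha hb hab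
  refine ⟨?_, ?_⟩
  · rw [Matrix.mulVec_add, Matrix.mulVec_smul, Matrix.mulVec_smul, hx.1, hy.1]
    simp
  · intro j
    have h1 := (hx.2 j); have h2 := (hy.2 j)
    constructor
    · have : (lo j : ℝ) = a * (lo j) + b * (lo j) := by rw [← add_mul, hab, one_mul]
      rw [this]
      exact add_le_add (mul_le_mul_of_nonneg_left h1.1 ha) (mul_le_mul_of_nonneg_left h2.1 hb)
    · have : (hi j : ℝ) = a * (hi j) + b * (hi j) := by rw [← add_mul, hab, one_mul]
      simp only [Pi.add_apply, Pi.smul_apply, smul_eq_mul]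
      rw [this]
      exact add_le_add (mul_le_mul_of_nonneg_left h1.2 ha) (mul_le_mul_of_nonneg_left h2.2 hb)

lemma continuous_mulVec (M : Matrix (Fin m) (Fin k) ℝ) :
    Continuous (fun p : Fin k → ℝ => M.mulVec p) := by
  refine continuous_pi fun i => ?_
  simp only [Matrix.mulVec, dotProduct]
  exact continuous_finset_sum _ fun j _ => (continuous_const.mul (continuous_apply j))

lemma isCompact_poly (M : Matrix (Fin m) (Fin k) ℝ) (lo hi : Fin k → ℤ) :
    IsCompact (Poly M lo hi) := by
  have hbox : IsCompact (Set.pi univ fun j : Fin k => Set.Icc (lo j : ℝ) (hi j : ℝ)) :=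
    isCompact_univ_pi fun j => isCompact_Icc
  refine hbox.of_isClosed_subset ?_ ?_
  · have h1 : IsClosed {p : Fin k → ℝ | M.mulVec p = 0} :=
      isClosed_eq (continuous_mulVec M) continuous_const
    have h2 : IsClosed (Set.pi univ fun j : Fin k => Set.Icc (lo j : ℝ) (hi j : ℝ)) :=
      isClosed_set_pi fun j _ => isClosed_Icc
    have : Poly M lo hi = {p : Fin k → ℝ | M.mulVec p = 0} ∩
        (Set.pi univ fun j : Fin k => Set.Icc (lo j : ℝ) (hi j : ℝ)) := by
      ext p
      simp only [Poly, Set.mem_setOf_eq, Set.mem_inter_iff, Set.mem_pi, Set.mem_univ,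
          Set.mem_Icc, forall_true_left, forall_and]
    rw [this]; exact h1.inter h2
  · intro p hp
    simp only [Set.mem_pi, Set.mem_univ, Set.mem_Icc, forall_true_left]
    exact fun j => hp.2 j





lemma exists_invertible_rows {r : ℕ} (N : Matrix (Fin m) (Fin r) ℝ)
    (hN : Function.Injective N.mulVec) :
    ∃ f : Fin r → Fin m, Function.Injective f ∧ IsUnit (N.submatrix f id) := by
  classical
  have hcols : LinearIndependent ℝ (fun j => Nᵀ j) := Matrix.mulVec_injective_iff.mp hN
  have hrankT : Nᵀ.rank = r := by
    have h := hcols.rank_matrix; simp only [Fintype.card_fin] at h; exact h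
  have hrank : N.rank = r := by rw [← Matrix.rank_transpose]; exact hrankT
  have hspan : Submodule.span ℝ (Set.range fun i => N i) = ⊤ := by
    apply Submodule.eq_top_of_finrank_eq
    have h2 := N.rank_eq_finrank_span_row
    rw [hrank] at h2
    show Module.finrank ℝ (Submodule.span ℝ (range N.row)) = _
    rw [← h2]
    simp [Module.finrank_fintype_fun_eq_card]
  obtain ⟨s, hs_sub, hs_span, hs_li⟩ := exists_linearIndependent ℝ (Set.range fun i => N i)
  rw [hspan] at hs_span
  let B : Module.Basis s ℝ (Fin r → ℝ) := Module.Basis.mk hs_li (by rw [Subtype.range_coe, hs_span])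
  let e : Fin r ≃ s := ((Pi.basisFun ℝ (Fin r)).indexEquiv B)
  have hpick : ∀ i : Fin r, ∃ i' : Fin m, N i' = (e i : Fin r → ℝ) := fun i => hs_sub (e i).2
  choose f hf using hpick
  have hfinj : Function.Injective f := by
    intro i i' hii
    have : (e i : Fin r → ℝ) = (e i' : Fin r → ℝ) := by rw [← hf, ← hf, hii]
    exact e.injective (Subtype.ext this)
  refine ⟨f, hfinj, ?_⟩
  rw [← Matrix.linearIndependent_rows_iff_isUnit]
  have hrows : (fun i : Fin r => (N.submatrix f id) i) = fun i => ((e i : Fin r → ℝ)) := by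
    funext i
    ext j
    simp [Matrix.submatrix, hf i]
  show LinearIndependent ℝ (fun i : Fin r => (N.submatrix f id) i)
  rw [hrows]
  have : LinearIndependent ℝ (fun x : s => (x : Fin r → ℝ)) := hs_li
  exact this.comp (fun i => e i) e.injective

lemma integral_solution {r : ℕ} (Q : Matrix (Fin r) (Fin r) ℝ)
    (hQint : ∀ i j, ∃ z : ℤ, Q i j = (z : ℝ)) (hQdet : Q.det = 1 ∨ Q.det = -1)
    (u : Fin r → ℝ) (hu : ∀ i, ∃ z : ℤ, u i = (z : ℝ))
    (y : Fin r → ℝ) (hy : Q.mulVec y = u) : ∀ i, ∃ z : ℤ, y i = (z : ℝ) := by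
  classical
  choose Qz hQz using hQint
  choose uz huz using hu
  set Q' : Matrix (Fin r) (Fin r) ℤ := Matrix.of Qz with hQ'
  have hmap : Q'.map (Int.cast : ℤ → ℝ) = Q := by
    ext i j; simp [Q', ← hQz]
  have hdet : ((Q'.det : ℤ) : ℝ) = Q.det := by
    rw [← hmap]
    exact (RingHom.map_det (Int.castRingHom ℝ) Q')
  have hdetunit : IsUnit Q'.det := by
    rw [Int.isUnit_iff]
    rcases hQdet with h | h
    · left; exact_mod_cast hdet.trans h
    · right; exact_mod_cast hdet.trans h
  have hQunit : IsUnit Q := by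
    rw [Matrix.isUnit_iff_isUnit_det, isUnit_iff_ne_zero]
    rcases hQdet with h | h <;> rw [h] <;> norm_num
  set y' : Fin r → ℤ := Q'⁻¹.mulVec uz with hy'
  have hsolve : Q'.mulVec y' = uz := by
    rw [hy', Matrix.mulVec_mulVec, Matrix.mul_nonsing_inv Q' hdetunit, Matrix.one_mulVec]
  have hcast : Q.mulVec (fun i => ((y' i : ℤ) : ℝ)) = u := by
    funext i
    have := congrFun hsolve i
    simp only [Matrix.mulVec, dotProduct] at this ⊢
    have : ((∑ j, Q' i j * y' j : ℤ) : ℝ) = ((uz i : ℤ) : ℝ) := by exact_mod_cast this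
    push_cast at this
    rw [huz i, ← this]
    apply Finset.sum_congr rfl
    intro j _
    beta_reduce
    rw [hQz i j]
    rfl
  have hinj : Function.Injective Q.mulVec := Matrix.mulVec_injective_iff_isUnit.mpr hQunit
  have : y = fun i => ((y' i : ℤ) : ℝ) := hinj (by rw [hy, hcast])
  intro i
  exact ⟨y' i, by rw [this]⟩

lemma signtype_int {x : ℝ} (hx : x ∈ Set.range (SignType.cast : SignType → ℝ)) :
    ∃ z : ℤ, x = (z : ℝ) := by
  obtain ⟨s, rfl⟩ := hx
  cases s
  · exact ⟨0, by simp⟩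
  · exact ⟨-1, by simp⟩
  · exact ⟨1, by simp⟩

lemma signtype_pm {x : ℝ} (hx : x ∈ Set.range (SignType.cast : SignType → ℝ))
    (hne : x ≠ 0) : x = 1 ∨ x = -1 := by
  obtain ⟨s, rfl⟩ := hx
  cases s
  · simp at hne
  · right; simp
  · left; simp

lemma extreme_integral {M : Matrix (Fin m) (Fin k) ℝ} (hM : M.IsTotallyUnimodular)
    (lo hi : Fin k → ℤ) {v : Fin k → ℝ}
    (hv : v ∈ Set.extremePoints ℝ (Poly M lo hi)) : IntVec v := by
  classical
  obtain ⟨⟨hv0, hvb⟩, hext⟩ := hv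
  set T : Finset (Fin k) :=
    Finset.univ.filter (fun j => (lo j : ℝ) < v j ∧ v j < (hi j : ℝ)) with hT
  have hmemT : ∀ j, j ∈ T ↔ ((lo j : ℝ) < v j ∧ v j < (hi j : ℝ)) := by
    intro j; simp [hT]
  have hout : ∀ j, j ∉ T → ∃ z : ℤ, v j = (z : ℝ) := by
    intro j hj
    rw [hmemT, not_and_or, not_lt, not_lt] at hj
    rcases hj with h | h
    · exact ⟨lo j, le_antisymm h (hvb j).1⟩
    · exact ⟨hi j, le_antisymm (hvb j).2 h⟩
  -- Claim 1: any kernel vector supported on T is zero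
  have hker : ∀ d : Fin k → ℝ, (∀ j, j ∉ T → d j = 0) → M.mulVec d = 0 → d = 0 := by
    intro d hsupp hd0
    by_contra hdne
    obtain ⟨j₀, hj₀⟩ : ∃ j, d j ≠ 0 := by
      by_contra hall
      push_neg at hall
      exact hdne (funext hall)
    have hj₀T : j₀ ∈ T := by
      by_contra hjn; exact hj₀ (hsupp j₀ hjn)
    have hTne : T.Nonempty := ⟨j₀, hj₀T⟩
    set ε : ℝ := T.inf' hTne (fun j => min (v j - lo j) ((hi j : ℝ) - v j)) with hε
    have hεpos : 0 < ε := by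
      rw [hε, Finset.lt_inf'_iff]
      intro j hj
      rw [hmemT] at hj
      exact lt_min (by linarith [hj.1]) (by linarith [hj.2])
    set C : ℝ := T.sup' hTne (fun j => |d j|) with hC
    have hCpos : 0 < C := lt_of_lt_of_le (abs_pos.mpr hj₀) (Finset.le_sup' (fun j => |d j|) hj₀T)
    set δ : ℝ := ε / C with hδ
    have hδpos : 0 < δ := div_pos hεpos hCpos
    have hbound : ∀ j, j ∈ T → δ * |d j| ≤ min (v j - lo j) ((hi j : ℝ) - v j) := by
      intro j hj
      have h1 : δ * |d j| ≤ δ * C := by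
        apply mul_le_mul_of_nonneg_left (Finset.le_sup' _ hj) hδpos.le
      have h2 : δ * C = ε := by rw [hδ, div_mul_cancel₀ ε hCpos.ne']
      calc δ * |d j| ≤ ε := by rw [← h2]; exact h1
        _ ≤ min (v j - lo j) ((hi j : ℝ) - v j) := Finset.inf'_le _ hj
    have hmem : ∀ (σ : ℝ), σ = 1 ∨ σ = -1 → (v + (σ * δ) • d) ∈ Poly M lo hi := by
      intro σ hσ
      constructor
      · rw [Matrix.mulVec_add, Matrix.mulVec_smul, hd0, hv0]
        simp
      · intro j
        by_cases hj : j ∈ T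
        · have hb := hbound j hj
          have habs : |σ * δ * d j| ≤ min (v j - lo j) ((hi j : ℝ) - v j) := by
            have : |σ| = 1 := by rcases hσ with h | h <;> simp [h]
            rw [abs_mul, abs_mul, this, one_mul, abs_of_pos hδpos]
            exact hb
          have h1 := abs_le.mp (habs.trans (min_le_left _ _))
          have h2 := abs_le.mp (habs.trans (min_le_right _ _))
          constructor
          · simp only [Pi.add_apply, Pi.smul_apply, smul_eq_mul]
            linarith [h1.1]
          · simp only [Pi.add_apply, Pi.smul_apply, smul_eq_mul]
            linarith [h2.2]
        · simp only [Pi.add_apply, Pi.smul_apply, smul_eq_mul, hsupp j hj, mul_zero, add_zero]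
          exact hvb j
    have hseg : v ∈ openSegment ℝ (v + δ • d) (v + (-δ) • d) := by
      refine ⟨1/2, 1/2, by norm_num, by norm_num, by norm_num, ?_⟩
      funext j
      simp only [Pi.add_apply, Pi.smul_apply, smul_eq_mul]
      ring
    have h₁ : (v + δ • d) ∈ Poly M lo hi := by
      have := hmem 1 (Or.inl rfl); simpa using this
    have h₂ : (v + (-δ) • d) ∈ Poly M lo hi := by
      have := hmem (-1) (Or.inr rfl); simpa using this
    have := hext h₁ h₂ hseg
    have hδd : δ • d = 0 := by
      have h := congrArg (fun w => w - v) this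
      simpa [add_sub_cancel_left] using h
    rcases smul_eq_zero.mp hδd with h | h
    · exact absurd h (ne_of_gt hδpos)
    · exact hdne h
  -- submatrix of columns T
  set r : ℕ := T.card with hr
  set eT : Fin r ≃ {x // x ∈ T} := T.equivFin.symm with heT
  set N : Matrix (Fin m) (Fin r) ℝ := M.submatrix id (fun i => (eT i : Fin k)) with hN
  have hNinj : Function.Injective N.mulVec := by
    intro d₁ d₂ hdd
    have hd0 : N.mulVec (d₁ - d₂) = 0 := by
      rw [Matrix.mulVec_sub, hdd, sub_self]
    set d := d₁ - d₂ with hd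
    set d' : Fin k → ℝ := fun j => if h : j ∈ T then d (eT.symm ⟨j, h⟩) else 0 with hd'
    have hMd' : M.mulVec d' = N.mulVec (d₁ - d₂) := by
      funext i
      simp only [Matrix.mulVec, dotProduct, hN, Matrix.submatrix_apply, id_eq]
      calc ∑ j : Fin k, M i j * d' j
          = ∑ j ∈ T, M i j * d' j := by
            refine (Finset.sum_subset T.subset_univ ?_).symm
            intro j _ hj
            simp [hd', hj]
        _ = ∑ x : {x // x ∈ T}, M i (x : Fin k) * d' (x : Fin k) := by
            rw [← Finset.sum_coe_sort T (fun j => M i j * d' j)]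
        _ = ∑ i' : Fin r, M i (eT i' : Fin k) * d' (eT i' : Fin k) := by
            rw [← Equiv.sum_comp eT (fun x => M i (x : Fin k) * d' (x : Fin k))]
        _ = ∑ i' : Fin r, M i (eT i' : Fin k) * d i' := by
            apply Finset.sum_congr rfl
            intro i' _
            have hdval : d' (eT i' : Fin k) = d i' := by
              have h2 := (eT i').2
              simp only [hd']
              rw [dif_pos h2, Subtype.coe_eta, Equiv.symm_apply_apply]
            rw [hdval]
    have : d' = 0 := by
      apply hker d' (fun j hj => by simp [hd', hj])
      rw [hMd', hd0]
    have hdz : d = 0 := by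
      funext i'
      have := congrFun this (eT i' : Fin k)
      simpa [hd', (eT i').2, Subtype.coe_eta] using this
    exact sub_eq_zero.mp hdz
  obtain ⟨f, hfinj, hfunit⟩ := exists_invertible_rows N hNinj
  set Q : Matrix (Fin r) (Fin r) ℝ := N.submatrix f id with hQ
  have hQsub : Q = M.submatrix f (fun j => (eT j : Fin k)) := by
    ext i j; simp [hQ, hN]
  have hgj : Function.Injective (fun j : Fin r => (eT j : Fin k)) :=
    Subtype.coe_injective.comp eT.injective
  have hQdet : Q.det = 1 ∨ Q.det = -1 := by
    have hrange : Q.det ∈ Set.range (SignType.cast : SignType → ℝ) := by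
      rw [hQsub]
      exact hM r f (fun j => (eT j : Fin k)) hfinj hgj
    have hne : Q.det ≠ 0 := by
      have := (Matrix.isUnit_iff_isUnit_det Q).mp hfunit
      exact this.ne_zero
    exact signtype_pm hrange hne
  have hQint : ∀ i j, ∃ z : ℤ, Q i j = (z : ℝ) := by
    intro i j
    rw [hQsub]
    exact signtype_int (hM.apply _ _)
  set vT : Fin r → ℝ := fun j => v (eT j : Fin k) with hvT
  set u : Fin r → ℝ := Q.mulVec vT with hu
  have huint : ∀ i, ∃ z : ℤ, u i = (z : ℝ) := by
    intro i
    have hrow : ∑ j : Fin k, M (f i) j * v j = 0 := by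
      have := congrFun hv0 (f i)
      simpa [Matrix.mulVec, dotProduct] using this
    have hsplit : u i = -∑ j ∈ Tᶜ, M (f i) j * v j := by
      have h1 : ∑ j ∈ T, M (f i) j * v j + ∑ j ∈ Tᶜ, M (f i) j * v j = 0 := by
        rw [Finset.sum_add_sum_compl]; exact hrow
      have h2 : u i = ∑ j ∈ T, M (f i) j * v j := by
        rw [hu]
        simp only [Matrix.mulVec, dotProduct, hQsub, Matrix.submatrix_apply, hvT]
        calc ∑ j : Fin r, M (f i) (eT j : Fin k) * v (eT j : Fin k)
            = ∑ x : {x // x ∈ T}, M (f i) (x : Fin k) * v (x : Fin k) :=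
              Equiv.sum_comp eT (fun x => M (f i) (x : Fin k) * v (x : Fin k))
          _ = ∑ j ∈ T, M (f i) j * v j := Finset.sum_coe_sort T (fun j => M (f i) j * v j)
      rw [h2]; linarith
    have hterm : ∀ j ∈ Tᶜ, ∃ z : ℤ, M (f i) j * v j = (z : ℝ) := by
      intro j hj
      obtain ⟨z₁, hz₁⟩ := signtype_int (hM.apply (f i) j)
      obtain ⟨z₂, hz₂⟩ := hout j (Finset.mem_compl.mp hj)
      exact ⟨z₁ * z₂, by rw [hz₁, hz₂]; push_cast; ring⟩
    choose g hg using hterm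
    refine ⟨-∑ j ∈ Tᶜ.attach, g j j.2, ?_⟩
    rw [hsplit]
    push_cast
    rw [neg_inj, ← Finset.sum_attach Tᶜ (fun j => M (f i) j * v j)]
    exact Finset.sum_congr rfl (fun j _ => hg j j.2)
  have hvTint := integral_solution Q hQint hQdet u huint vT rfl
  intro j
  by_cases hj : j ∈ T
  · obtain ⟨z, hz⟩ := hvTint (eT.symm ⟨j, hj⟩)
    refine ⟨z, ?_⟩
    rw [← hz, hvT]
    congr 1
    rw [Equiv.apply_symm_apply]
  · exact hout j hj

lemma mem_convexHull_int {M : Matrix (Fin m) (Fin k) ℝ} (hM : M.IsTotallyUnimodular)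
    (lo hi : Fin k → ℤ) {p : Fin k → ℝ} (hp : p ∈ Poly M lo hi) :
    p ∈ convexHull ℝ {q | q ∈ Poly M lo hi ∧ IntVec q} := by
  classical
  have hcomp := isCompact_poly M lo hi
  have hconv := convex_poly M lo hi
  have hKM := closure_convexHull_extremePoints hcomp hconv
  have hsub : (Poly M lo hi).extremePoints ℝ ⊆ {q | q ∈ Poly M lo hi ∧ IntVec q} :=
    fun q hq => ⟨extremePoints_subset hq, extreme_integral hM lo hi hq⟩
  have hfin : {q : Fin k → ℝ | q ∈ Poly M lo hi ∧ IntVec q}.Finite := by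
    have hss : {q : Fin k → ℝ | q ∈ Poly M lo hi ∧ IntVec q} ⊆
        (fun z : Fin k → ℤ => fun j => (z j : ℝ)) ''
          (Set.pi univ fun j => Set.Icc (lo j) (hi j)) := by
      rintro q ⟨hqP, hqI⟩
      choose z hz using hqI
      refine ⟨z, fun j _ => ?_, by funext j; exact (hz j).symm⟩
      have h1 := (hqP.2 j).1
      have h2 := (hqP.2 j).2
      rw [hz j] at h1 h2
      exact ⟨by exact_mod_cast h1, by exact_mod_cast h2⟩
    exact Set.Finite.subset
      (Set.Finite.image _ (Set.Finite.pi fun j => Set.finite_Icc _ _)) hss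
  have hfinext : ((Poly M lo hi).extremePoints ℝ).Finite := hfin.subset hsub
  have heq : convexHull ℝ ((Poly M lo hi).extremePoints ℝ) = Poly M lo hi := by
    rw [← (hfinext.isClosed_convexHull ℝ).closure_eq]
    exact hKM
  exact convexHull_mono hsub (by rw [heq]; exact hp)

lemma feas_combo {m n : ℕ} {A : Matrix (Fin m) (Fin n) ℝ} {b : Fin m → ℝ} {l1 l2 t : ℝ}
    {x y : Fin n → ℝ} (hx : PFeasible A b l1 x) (hy : PFeasible A b l2 y)
    (h0 : 0 ≤ t) (h1 : t ≤ 1) :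
    PFeasible A b ((1-t)*l1 + t*l2) ((1-t) • x + t • y) := by
  constructor
  · rw [Matrix.mulVec_add, Matrix.mulVec_smul, Matrix.mulVec_smul, hx.1, hy.1,
      smul_smul, smul_smul, ← add_smul]
  · intro j
    have hxj := hx.2 j; have hyj := hy.2 j
    constructor
    · have := add_nonneg (mul_nonneg (by linarith : (0:ℝ) ≤ 1 - t) hxj.1)
        (mul_nonneg h0 hyj.1)
      simpa using this
    · simp only [Pi.add_apply, Pi.smul_apply, smul_eq_mul]
      nlinarith [mul_le_mul_of_nonneg_left hxj.2 (by linarith : (0:ℝ) ≤ 1 - t),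
        mul_le_mul_of_nonneg_left hyj.2 h0]

lemma isCompact_feasSet {m n : ℕ} (A : Matrix (Fin m) (Fin n) ℝ) (b : Fin m → ℝ) (lam : ℝ) :
    IsCompact {x : Fin n → ℝ | PFeasible A b lam x} := by
  have hbox : IsCompact (Set.pi univ fun _ : Fin n => Set.Icc (0:ℝ) 1) :=
    isCompact_univ_pi fun _ => isCompact_Icc
  refine hbox.of_isClosed_subset ?_ ?_
  · have hcont : Continuous (fun p : Fin n → ℝ => A.mulVec p) := by
      refine continuous_pi fun i => ?_
      simp only [Matrix.mulVec, dotProduct]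
      exact continuous_finset_sum _ fun j _ => continuous_const.mul (continuous_apply j)
    have h1 : IsClosed {p : Fin n → ℝ | A.mulVec p = lam • b} :=
      isClosed_eq hcont continuous_const
    have h2 : IsClosed (Set.pi univ fun _ : Fin n => Set.Icc (0:ℝ) 1) :=
      isClosed_set_pi fun j _ => isClosed_Icc
    have heq : {x : Fin n → ℝ | PFeasible A b lam x} = {p : Fin n → ℝ | A.mulVec p = lam • b} ∩
        (Set.pi univ fun _ : Fin n => Set.Icc (0:ℝ) 1) := by
      ext p
      simp only [PFeasible, Set.mem_setOf_eq, Set.mem_inter_iff, Set.mem_pi, Set.mem_univ,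
        Set.mem_Icc, forall_true_left, forall_and]
    rw [heq]; exact h1.inter h2
  · intro p hp
    simp only [Set.mem_pi, Set.mem_univ, Set.mem_Icc, forall_true_left]
    exact fun j => hp.2 j

lemma exists_opt {m n : ℕ} (A : Matrix (Fin m) (Fin n) ℝ) (b : Fin m → ℝ) (c : Fin n → ℝ)
    (lam : ℝ) (hne : ∃ x, PFeasible A b lam x) :
    ∃ x, PFeasible A b lam x ∧ (∀ y, PFeasible A b lam y → c ⬝ᵥ x ≤ c ⬝ᵥ y) ∧
      phi A b c lam = c ⬝ᵥ x := by
  have hcont : Continuous fun x : Fin n → ℝ => c ⬝ᵥ x := by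
    simp only [dotProduct]
    exact continuous_finset_sum _ fun j _ => continuous_const.mul (continuous_apply j)
  obtain ⟨x, hxF, hmin⟩ :=
    (isCompact_feasSet A b lam).exists_isMinOn hne hcont.continuousOn
  have hmin' : ∀ y, PFeasible A b lam y → c ⬝ᵥ x ≤ c ⬝ᵥ y := fun y hy =>
    isMinOn_iff.mp hmin y hy
  refine ⟨x, hxF, hmin', le_antisymm (csInf_le ⟨c ⬝ᵥ x, ?_⟩ ⟨x, hxF, rfl⟩)
    (le_csInf ⟨c ⬝ᵥ x, ⟨x, hxF, rfl⟩⟩ ?_)⟩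
  · rintro _ ⟨y, hy, rfl⟩; exact hmin' y hy
  · rintro _ ⟨y, hy, rfl⟩; exact hmin' y hy

lemma phi_le {m n : ℕ} {A : Matrix (Fin m) (Fin n) ℝ} {b : Fin m → ℝ} {c : Fin n → ℝ}
    {lam : ℝ} {y : Fin n → ℝ} (hy : PFeasible A b lam y) : phi A b c lam ≤ c ⬝ᵥ y := by
  obtain ⟨x, _, hmin, hphi⟩ := exists_opt A b c lam ⟨y, hy⟩
  rw [hphi]; exact hmin y hy

end StmtAux

open StmtAux in
/-- Between consecutive integers the value function `φ` is affine (all breakpoints are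
integral), and feasibility at the two integer endpoints gives feasibility in between. -/
theorem stmt_3 {m n : ℕ} (A : Matrix (Fin m) (Fin n) ℝ) (b : Fin m → ℝ) (c : Fin n → ℝ)
    (hb : b ≠ 0) (hc : ∀ j, 0 ≤ c j) (hTU : AugTU A b)
    (m₀ : ℕ)
    (h0 : ∃ x : Fin n → ℝ, PFeasible A b (m₀ : ℝ) x)
    (h1 : ∃ x : Fin n → ℝ, PFeasible A b ((m₀ : ℝ) + 1) x) :
    (∀ lam : ℝ, (m₀ : ℝ) ≤ lam → lam ≤ (m₀ : ℝ) + 1 → ∃ x : Fin n → ℝ, PFeasible A b lam x) ∧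
    ∃ h g : ℝ, ∀ lam : ℝ, (m₀ : ℝ) ≤ lam → lam ≤ (m₀ : ℝ) + 1 →
      phi A b c lam = h + g * lam := by
  classical
  obtain ⟨x₀, hx₀⟩ := h0
  obtain ⟨x₁, hx₁⟩ := h1
  have hfeaslam : ∀ lam : ℝ, (m₀ : ℝ) ≤ lam → lam ≤ (m₀ : ℝ) + 1 →
      ∃ x : Fin n → ℝ, PFeasible A b lam x := by
    intro lam hl1 hl2
    have hcomb := feas_combo hx₀ hx₁ (by linarith : (0:ℝ) ≤ lam - m₀)
      (by linarith : lam - (m₀:ℝ) ≤ 1)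
    have heq : (1-(lam - (m₀:ℝ)))*(m₀:ℝ) + (lam - (m₀:ℝ))*((m₀:ℝ)+1) = lam := by ring
    rw [heq] at hcomb
    exact ⟨_, hcomb⟩
  refine ⟨hfeaslam, phi A b c m₀ - (phi A b c (m₀+1) - phi A b c m₀) * m₀,
    phi A b c (m₀+1) - phi A b c m₀, ?_⟩
  intro lam hl1 hl2
  suffices hkey : phi A b c lam =
      (1 - (lam - m₀)) * phi A b c m₀ + (lam - m₀) * phi A b c (m₀+1) by
    rw [hkey]; ring
  -- matrix with appended column
  set M : Matrix (Fin m) (Fin (n+1)) ℝ := Matrix.of (fun i => Fin.snoc (A i) (b i)) with hMdef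
  set lo : Fin (n+1) → ℤ := Fin.snoc (fun _ => 0) (-((m₀:ℤ)+1)) with hlodef
  set hi : Fin (n+1) → ℤ := Fin.snoc (fun _ => 1) (-(m₀:ℤ)) with hhidef
  have hMTU : M.IsTotallyUnimodular := by
    have h2 : M = (Matrix.fromCols A (Matrix.of fun i (_ : Unit) => b i)).submatrix id
        (Fin.snoc (fun j => Sum.inl j) (Sum.inr ())) := by
      ext i j
      refine Fin.lastCases ?_ ?_ j
      · simp [hMdef]
      · intro j'; simp [hMdef]
    rw [h2]; exact hTU.submatrix _ _
  have hsnoc_mulVec : ∀ (x : Fin n → ℝ) (s : ℝ),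
      M.mulVec (Fin.snoc x s) = fun i => (A.mulVec x) i + s * b i := by
    intro x s
    funext i
    simp only [Matrix.mulVec, dotProduct]
    rw [Fin.sum_univ_castSucc]
    simp only [hMdef, Matrix.of_apply, Fin.snoc_castSucc, Fin.snoc_last]
    rw [mul_comm]
  have hfeasP : ∀ (x : Fin n → ℝ) (l : ℝ), PFeasible A b l x → (m₀:ℝ) ≤ l → l ≤ (m₀:ℝ)+1 →
      Fin.snoc x (-l) ∈ Poly M lo hi := by
    intro x l hx hml hlm
    constructor
    · rw [hsnoc_mulVec]
      funext i
      have := congrFun hx.1 i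
      simp only [Pi.smul_apply, smul_eq_mul] at this
      simp only [Pi.zero_apply]
      rw [this]; ring
    · intro j
      refine Fin.lastCases ?_ ?_ j
      · simp only [hlodef, hhidef, Fin.snoc_last]
        push_cast
        constructor <;> linarith
      · intro j'
        simp only [hlodef, hhidef, Fin.snoc_castSucc]
        push_cast
        exact (hx.2 j')
  have hPfeas : ∀ q ∈ Poly M lo hi,
      PFeasible A b (-(q (Fin.last n))) (fun j => q (Fin.castSucc j)) ∧
      (m₀:ℝ) ≤ -(q (Fin.last n)) ∧ -(q (Fin.last n)) ≤ (m₀:ℝ)+1 := by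
    intro q hq
    have hq' : q = Fin.snoc (fun j => q (Fin.castSucc j)) (q (Fin.last n)) := by
      funext j
      refine Fin.lastCases ?_ ?_ j
      · rw [Fin.snoc_last]
      · intro j'; rw [Fin.snoc_castSucc]
    have hmv := hq.1
    rw [hq', hsnoc_mulVec] at hmv
    have hb0 := hq.2 (Fin.last n)
    simp only [hlodef, hhidef, Fin.snoc_last] at hb0
    push_cast at hb0
    refine ⟨⟨?_, ?_⟩, by linarith [hb0.1, hb0.2], by linarith [hb0.1, hb0.2]⟩
    · funext i
      have := congrFun hmv i
      simp only [Pi.zero_apply] at this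
      simp only [Pi.smul_apply, smul_eq_mul]
      linarith
    · intro j
      have := hq.2 (Fin.castSucc j)
      simp only [hlodef, hhidef, Fin.snoc_castSucc] at this
      push_cast at this
      exact this
  -- upper bound
  obtain ⟨y₀, hy₀f, hy₀min, hy₀phi⟩ := exists_opt A b c (m₀:ℝ) ⟨x₀, hx₀⟩
  obtain ⟨y₁, hy₁f, hy₁min, hy₁phi⟩ := exists_opt A b c ((m₀:ℝ)+1) ⟨x₁, hx₁⟩
  have ht0 : (0:ℝ) ≤ lam - m₀ := by linarith
  have ht1 : lam - (m₀:ℝ) ≤ 1 := by linarith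
  have hle : phi A b c lam ≤
      (1 - (lam - m₀)) * phi A b c m₀ + (lam - m₀) * phi A b c (m₀+1) := by
    have hcomb := feas_combo hy₀f hy₁f ht0 ht1
    have heq : (1-(lam - (m₀:ℝ)))*(m₀:ℝ) + (lam - (m₀:ℝ))*((m₀:ℝ)+1) = lam := by ring
    rw [heq] at hcomb
    have hphile := phi_le (c := c) hcomb
    have hdot : c ⬝ᵥ ((1-(lam - (m₀:ℝ))) • y₀ + (lam - (m₀:ℝ)) • y₁) =
        (1 - (lam - m₀)) * (c ⬝ᵥ y₀) + (lam - m₀) * (c ⬝ᵥ y₁) := by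
      simp only [dotProduct, Pi.add_apply, Pi.smul_apply, smul_eq_mul,
        Finset.mul_sum, ← Finset.sum_add_distrib]
      apply Finset.sum_congr rfl
      intro j _
      ring
    rw [hdot, ← hy₀phi, ← hy₁phi] at hphile
    exact hphile
  -- lower bound
  obtain ⟨xs, hxsf, hxsmin, hxsphi⟩ := exists_opt A b c lam (hfeaslam lam hl1 hl2)
  have hpPoly : Fin.snoc xs (-lam) ∈ Poly M lo hi := hfeasP xs lam hxsf hl1 hl2
  have hp := mem_convexHull_int hMTU lo hi hpPoly
  rw [convexHull_eq] at hp
  obtain ⟨ι, S, w, z, hw0, hw1, hzG, hcm⟩ := hp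
  have hsum : Fin.snoc xs (-lam) = ∑ i ∈ S, w i • z i := by
    rw [← hcm, Finset.centerMass_eq_of_sum_1 _ _ hw1]
  have hfeas_i : ∀ i ∈ S, PFeasible A b (-(z i (Fin.last n))) (fun j => z i (Fin.castSucc j)) :=
    fun i hiS => (hPfeas _ (hzG i hiS).1).1
  have hdichot : ∀ i ∈ S, z i (Fin.last n) = -(m₀:ℝ) ∨ z i (Fin.last n) = -((m₀:ℝ)+1) := by
    intro i hiS
    obtain ⟨zz, hzz⟩ := (hzG i hiS).2 (Fin.last n)
    have hb0 := (hzG i hiS).1.2 (Fin.last n)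
    simp only [hlodef, hhidef, Fin.snoc_last] at hb0
    rw [hzz] at hb0 ⊢
    have hlo' : -((m₀:ℤ)+1) ≤ zz := by exact_mod_cast hb0.1
    have hhi' : zz ≤ -(m₀:ℤ) := by exact_mod_cast hb0.2
    have : zz = -(m₀:ℤ) ∨ zz = -((m₀:ℤ)+1) := by omega
    rcases this with h | h <;> [left; right] <;> rw [h] <;> push_cast <;> ring
  set S₁ : Finset ι := S.filter (fun i => z i (Fin.last n) = -((m₀:ℝ)+1)) with hS₁def
  set S₀ : Finset ι := S.filter (fun i => ¬(z i (Fin.last n) = -((m₀:ℝ)+1))) with hS₀def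
  have hsplitw : ∑ i ∈ S₁, w i + ∑ i ∈ S₀, w i = 1 := by
    rw [hS₁def, hS₀def, Finset.sum_filter_add_sum_filter_not]; exact hw1
  have hlast : -lam = ∑ i ∈ S, w i * z i (Fin.last n) := by
    have h := congrFun hsum (Fin.last n)
    rw [Fin.snoc_last] at h
    rw [h, Finset.sum_apply]
    apply Finset.sum_congr rfl
    intro i _
    simp [Pi.smul_apply]
  have hS₁sum : ∑ i ∈ S₁, w i * z i (Fin.last n) = (∑ i ∈ S₁, w i) * (-((m₀:ℝ)+1)) := by
    rw [Finset.sum_mul]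
    apply Finset.sum_congr rfl
    intro i hiS₁
    rw [(Finset.mem_filter.mp hiS₁).2]
  have hS₀sum : ∑ i ∈ S₀, w i * z i (Fin.last n) = (∑ i ∈ S₀, w i) * (-(m₀:ℝ)) := by
    rw [Finset.sum_mul]
    apply Finset.sum_congr rfl
    intro i hiS₀
    obtain ⟨hiS, hcond⟩ := Finset.mem_filter.mp hiS₀
    rcases hdichot i hiS with h | h
    · rw [h]
    · exact absurd h hcond
  have hW₁ : ∑ i ∈ S₁, w i = lam - m₀ := by
    have heq2 : -lam = (∑ i ∈ S₁, w i) * (-((m₀:ℝ)+1)) + (∑ i ∈ S₀, w i) * (-(m₀:ℝ)) := by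
      rw [hlast, ← hS₁sum, ← hS₀sum, hS₁def, hS₀def, Finset.sum_filter_add_sum_filter_not]
    have hW₀ : ∑ i ∈ S₀, w i = 1 - ∑ i ∈ S₁, w i := by linarith
    rw [hW₀] at heq2
    ring_nf at heq2
    linarith
  have hxsval : ∀ j, xs j = ∑ i ∈ S, w i * z i (Fin.castSucc j) := by
    intro j
    have h := congrFun hsum (Fin.castSucc j)
    rw [Fin.snoc_castSucc] at h
    rw [h, Finset.sum_apply]
    apply Finset.sum_congr rfl
    intro i _
    simp [Pi.smul_apply]
  have hobj : c ⬝ᵥ xs = ∑ i ∈ S, w i * (c ⬝ᵥ (fun j => z i (Fin.castSucc j))) := by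
    simp only [dotProduct]
    calc ∑ j, c j * xs j
        = ∑ j, ∑ i ∈ S, c j * (w i * z i (Fin.castSucc j)) := by
          apply Finset.sum_congr rfl
          intro j _
          rw [hxsval j, Finset.mul_sum]
      _ = ∑ i ∈ S, ∑ j, c j * (w i * z i (Fin.castSucc j)) := Finset.sum_comm
      _ = ∑ i ∈ S, w i * ∑ j, c j * z i (Fin.castSucc j) := by
          apply Finset.sum_congr rfl
          intro i _
          rw [Finset.mul_sum]
          apply Finset.sum_congr rfl
          intro j _
          ring
  have hge₁ : ∀ i ∈ S₁, phi A b c ((m₀:ℝ)+1) ≤ c ⬝ᵥ (fun j => z i (Fin.castSucc j)) := by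
    intro i hiS₁
    obtain ⟨hiS, hcond⟩ := Finset.mem_filter.mp hiS₁
    have hf := hfeas_i i hiS
    rw [hcond] at hf
    have hrw : -(-((m₀:ℝ)+1)) = (m₀:ℝ)+1 := by ring
    rw [hrw] at hf
    exact phi_le hf
  have hge₀ : ∀ i ∈ S₀, phi A b c (m₀:ℝ) ≤ c ⬝ᵥ (fun j => z i (Fin.castSucc j)) := by
    intro i hiS₀
    obtain ⟨hiS, hcond⟩ := Finset.mem_filter.mp hiS₀
    have hf := hfeas_i i hiS
    rcases hdichot i hiS with h | h
    · rw [h] at hf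
      have hrw : -(-(m₀:ℝ)) = (m₀:ℝ) := by ring
      rw [hrw] at hf
      exact phi_le hf
    · exact absurd h hcond
  have hlow : (∑ i ∈ S₁, w i) * phi A b c ((m₀:ℝ)+1) + (∑ i ∈ S₀, w i) * phi A b c (m₀:ℝ)
      ≤ c ⬝ᵥ xs := by
    rw [hobj, ← Finset.sum_filter_add_sum_filter_not S
      (fun i => z i (Fin.last n) = -((m₀:ℝ)+1))
      (fun i => w i * (c ⬝ᵥ (fun j => z i (Fin.castSucc j)))), Finset.sum_mul, Finset.sum_mul]
    apply add_le_add
    · apply Finset.sum_le_sum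
      intro i hiS₁
      exact mul_le_mul_of_nonneg_left (hge₁ i hiS₁) (hw0 i (Finset.mem_filter.mp hiS₁).1)
    · apply Finset.sum_le_sum
      intro i hiS₀
      exact mul_le_mul_of_nonneg_left (hge₀ i hiS₀) (hw0 i (Finset.mem_filter.mp hiS₀).1)
  have hW₀' : ∑ i ∈ S₀, w i = 1 - (lam - (m₀:ℝ)) := by
    rw [← hW₁]; linarith
  rw [hW₁, hW₀', ← hxsphi] at hlow
  linarith
end

section
/- Let Y(k) = { y ∈ ℝ^m : y A_{J₀} ≤ c_{J₀} and y A_{J₁} ≥ c_{J₁} }. Then μ(k) = k · sup{ y·b : y ∈ Y(k) }. -/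
open Matrix Set

open scoped Classical in
/-- The max benchmark value of the (possibly pruned) problem with column index set `J`,
relative to the unique binary optimal solution `xstar`:
maximize `∑_{j ∈ J₁} z j` subject to `y A_{J₀} ≤ c_{J₀}`, `y A_{J₁} ≥ z`, `z ≥ c_{J₁}`,
where `J₀ = {j ∈ J | xstar j = 0}` and `J₁ = {j ∈ J | xstar j = 1}`. -/
noncomputable def muB {m n : ℕ} (A : Matrix (Fin m) (Fin n) ℝ) (c : Fin n → ℝ)
    (J : Set (Fin n)) (xstar : Fin n → ℝ) : ℝ :=
  sSup { v : ℝ | ∃ (z : Fin n → ℝ) (y : Fin m → ℝ),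
    (∀ j ∈ J, xstar j = 0 → A.vecMul y j ≤ c j) ∧
    (∀ j ∈ J, xstar j = 1 → z j ≤ A.vecMul y j) ∧
    (∀ j ∈ J, xstar j = 1 → c j ≤ z j) ∧
    v = ∑ j : Fin n, if j ∈ J ∧ xstar j = 1 then z j else 0 }

/-- `μ(k) = k · sup { y·b : y ∈ Y(k) }`. -/
theorem stmt_6 {m n : ℕ} (A : Matrix (Fin m) (Fin n) ℝ) (b : Fin m → ℝ) (c : Fin n → ℝ)
    (hb : b ≠ 0) (hc : ∀ j, 0 ≤ c j) (hTU : AugTU A b)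
    (k : ℕ) (hk : 0 < k)
    (xstar : Fin n → ℝ) (hopt : POptimal A b c (k : ℝ) xstar)
    (huniq : ∀ x : Fin n → ℝ, POptimal A b c (k : ℝ) x → x = xstar)
    (hbin : IsBinary xstar) :
    muB A c Set.univ xstar =
      (k : ℝ) * sSup { v : ℝ | ∃ y : Fin m → ℝ,
        (∀ j, xstar j = 0 → A.vecMul y j ≤ c j) ∧
        (∀ j, xstar j = 1 → c j ≤ A.vecMul y j) ∧
        v = y ⬝ᵥ b } := by
  classical
  obtain ⟨⟨hAx, hbox⟩, hmin⟩ := hopt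
  set T := { v : ℝ | ∃ y : Fin m → ℝ,
      (∀ j, xstar j = 0 → A.vecMul y j ≤ c j) ∧
      (∀ j, xstar j = 1 → c j ≤ A.vecMul y j) ∧
      v = y ⬝ᵥ b } with hTdef
  set S := { v : ℝ | ∃ (z : Fin n → ℝ) (y : Fin m → ℝ),
      (∀ j ∈ (Set.univ : Set (Fin n)), xstar j = 0 → A.vecMul y j ≤ c j) ∧
      (∀ j ∈ (Set.univ : Set (Fin n)), xstar j = 1 → z j ≤ A.vecMul y j) ∧
      (∀ j ∈ (Set.univ : Set (Fin n)), xstar j = 1 → c j ≤ z j) ∧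
      v = ∑ j : Fin n, if j ∈ (Set.univ : Set (Fin n)) ∧ xstar j = 1 then z j else 0 }
    with hSdef
  have hmuB : muB A c Set.univ xstar = sSup S := by
    rw [muB, hSdef]
    congr!
  have key : ∀ y : Fin m → ℝ,
      (∑ j : Fin n, if j ∈ (Set.univ : Set (Fin n)) ∧ xstar j = 1 then A.vecMul y j else 0)
        = (k : ℝ) * (y ⬝ᵥ b) := by
    intro y
    have h1 : (∑ j : Fin n, if j ∈ (Set.univ : Set (Fin n)) ∧ xstar j = 1
          then A.vecMul y j else 0) = A.vecMul y ⬝ᵥ xstar := by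
      unfold dotProduct
      apply Finset.sum_congr rfl
      intro j _
      rcases hbin j with h | h <;> simp [h]
    rw [h1, ← Matrix.dotProduct_mulVec, hAx, dotProduct_smul, smul_eq_mul]
  have himg : ∀ t ∈ T, (k : ℝ) * t ∈ S := by
    rintro t ⟨y, h0, h1, rfl⟩
    refine ⟨A.vecMul y, y, fun j _ => h0 j, fun j _ h => le_rfl,
      fun j _ h => h1 j h, ?_⟩
    rw [key y]
  have hle : ∀ v ∈ S, ∃ t ∈ T, v ≤ (k : ℝ) * t := by
    rintro v ⟨z, y, h0, h1, h2, rfl⟩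
    refine ⟨y ⬝ᵥ b, ⟨y, fun j => h0 j (Set.mem_univ j),
      fun j h => le_trans (h2 j (Set.mem_univ j) h) (h1 j (Set.mem_univ j) h), rfl⟩, ?_⟩
    rw [← key y]
    apply Finset.sum_le_sum
    intro j _
    by_cases h : xstar j = 1
    · simp only [Set.mem_univ, true_and, h, if_pos]
      exact h1 j (Set.mem_univ j) h
    · simp [h]
  have hk0 : (0 : ℝ) < (k : ℝ) := by exact_mod_cast hk
  rw [hmuB]
  by_cases hTne : T.Nonempty
  · by_cases hbdd : BddAbove T
    · obtain ⟨t0, ht0⟩ := id hTne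
      have hSbdd : BddAbove S := by
        refine ⟨(k : ℝ) * sSup T, fun v hv => ?_⟩
        obtain ⟨t, ht, hvt⟩ := hle v hv
        calc v ≤ (k : ℝ) * t := hvt
          _ ≤ (k : ℝ) * sSup T := by
              exact mul_le_mul_of_nonneg_left (le_csSup hbdd ht) hk0.le
      have hSne : S.Nonempty := ⟨_, himg t0 ht0⟩
      apply le_antisymm
      · apply csSup_le hSne
        intro v hv
        obtain ⟨t, ht, hvt⟩ := hle v hv
        calc v ≤ (k : ℝ) * t := hvt
          _ ≤ (k : ℝ) * sSup T :=
              mul_le_mul_of_nonneg_left (le_csSup hbdd ht) hk0.le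
      · rw [mul_comm, ← le_div_iff₀ hk0]
        apply csSup_le hTne
        intro t ht
        rw [le_div_iff₀ hk0, mul_comm]
        exact le_csSup hSbdd (himg t ht)
    · have hSbdd : ¬ BddAbove S := by
        rintro ⟨B, hB⟩
        apply hbdd
        refine ⟨B / (k : ℝ), fun t ht => ?_⟩
        rw [le_div_iff₀ hk0, mul_comm]
        exact hB (himg t ht)
      rw [Real.sSup_of_not_bddAbove hbdd, Real.sSup_of_not_bddAbove hSbdd, mul_zero]
  · have hSe : S = ∅ := by
      rw [Set.eq_empty_iff_forall_notMem]
      intro v hv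
      obtain ⟨t, ht, _⟩ := hle v hv
      exact hTne ⟨t, ht⟩
    rw [hSe, Set.not_nonempty_iff_eq_empty.mp hTne, Real.sSup_empty, mul_zero]
end

section
/- Let x̄¹, …, x̄^{k+1} be binary feasible solutions to P(1) (i.e., A x̄ⁱ = b, x̄ⁱ ∈ {0,1}^n) with x̄¹ + ⋯ + x̄^{k+1} = x̄, and let δ = max_{1 ≤ i ≤ k+1} c·x̄ⁱ. Then φ̃(k) ≤ φ(k+1) − δ. -/
open Matrix Set

/-- Feasibility for the pruned problem `P̃(λ)`: only columns in `J` may be used. -/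
def PrunedFeasible {m n : ℕ} (A : Matrix (Fin m) (Fin n) ℝ) (b : Fin m → ℝ)
    (J : Set (Fin n)) (lam : ℝ) (x : Fin n → ℝ) : Prop :=
  A.mulVec x = lam • b ∧ (∀ j, 0 ≤ x j ∧ x j ≤ 1) ∧ ∀ j ∉ J, x j = 0

/-- `φ̃(λ)`, the optimal value of the pruned problem `P̃(λ)`. -/
noncomputable def phiPruned {m n : ℕ} (A : Matrix (Fin m) (Fin n) ℝ) (b : Fin m → ℝ)
    (c : Fin n → ℝ) (J : Set (Fin n)) (lam : ℝ) : ℝ :=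
  sInf ((fun x => c ⬝ᵥ x) '' {x | PrunedFeasible A b J lam x})

/-- Optimality for the pruned problem `P̃(λ)`. -/
def PrunedOptimal {m n : ℕ} (A : Matrix (Fin m) (Fin n) ℝ) (b : Fin m → ℝ) (c : Fin n → ℝ)
    (J : Set (Fin n)) (lam : ℝ) (x : Fin n → ℝ) : Prop :=
  PrunedFeasible A b J lam x ∧ ∀ x', PrunedFeasible A b J lam x' → c ⬝ᵥ x ≤ c ⬝ᵥ x'

/-- If a binary optimal solution `xbar` of `P(k+1)` decomposes into `k+1` binary feasible
solutions of `P(1)` with maximal cost `δ`, then `φ̃(k) ≤ φ(k+1) − δ`. -/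
theorem stmt_10 {m n : ℕ} (A : Matrix (Fin m) (Fin n) ℝ) (b : Fin m → ℝ) (c : Fin n → ℝ)
    (hb : b ≠ 0) (hc : ∀ j, 0 ≤ c j) (hTU : AugTU A b)
    (k : ℕ) (hk : 0 < k)
    -- `P(k+1)` has a unique optimal solution `xbar`, which is binary; `J = {j : xbar j = 1}`
    (xbar : Fin n → ℝ) (hopt' : POptimal A b c ((k : ℝ) + 1) xbar)
    (huniq' : ∀ x : Fin n → ℝ, POptimal A b c ((k : ℝ) + 1) x → x = xbar)
    (hbin' : IsBinary xbar)
    (xs : Fin (k + 1) → (Fin n → ℝ))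
    (hxsbin : ∀ i, IsBinary (xs i))
    (hxsfeas : ∀ i, A.mulVec (xs i) = b)
    (hsum : ∑ i, xs i = xbar)
    (δ : ℝ) (hδ : IsGreatest (Set.range fun i => c ⬝ᵥ xs i) δ) :
    phiPruned A b c {j | xbar j = 1} (k : ℝ) ≤ phi A b c ((k : ℝ) + 1) - δ := by
  obtain ⟨i₀, hi₀⟩ := hδ.1
  -- each xs i is dominated coordinatewise by xbar
  have hle : ∀ i j, xs i j ≤ xbar j := by
    intro i j
    have := congrFun hsum j
    simp only [Finset.sum_apply] at this
    rw [← this]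
    exact Finset.single_le_sum (fun i' _ => ((hxsbin i' j).elim (fun h => h.ge) (fun h => by
      rw [h]; norm_num))) (Finset.mem_univ i)
  have hnn : ∀ i j, 0 ≤ xs i j := fun i j =>
    (hxsbin i j).elim (fun h => h.ge) (fun h => by rw [h]; norm_num)
  set x' : Fin n → ℝ := fun j => xbar j - xs i₀ j with hx'
  have hfeas : PrunedFeasible A b {j | xbar j = 1} (k : ℝ) x' := by
    refine ⟨?_, ?_, ?_⟩
    · have : x' = xbar - xs i₀ := rfl
      rw [this, Matrix.mulVec_sub, hopt'.1.1, hxsfeas i₀]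
      ext i; simp [Pi.smul_apply, smul_eq_mul]; ring
    · intro j
      constructor
      · simp [hx', hle i₀ j]
      · have h1 : xbar j ≤ 1 := (hopt'.1.2 j).2
        have := hnn i₀ j
        simp only [hx']; linarith
    · intro j hj
      simp only [Set.mem_setOf_eq] at hj
      have h0 : xbar j = 0 := (hbin' j).resolve_right hj
      have := hle i₀ j
      have := hnn i₀ j
      simp only [hx']; linarith
  -- phi (k+1) = c ⬝ᵥ xbar
  have hbdd1 : BddBelow ((fun x => c ⬝ᵥ x) '' {x | PFeasible A b ((k : ℝ) + 1) x}) := by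
    refine ⟨0, ?_⟩
    rintro y ⟨x, hx, rfl⟩
    exact Finset.sum_nonneg fun j _ => mul_nonneg (hc j) (hx.2 j).1
  have hphi : phi A b c ((k : ℝ) + 1) = c ⬝ᵥ xbar := by
    refine le_antisymm (csInf_le hbdd1 ⟨xbar, hopt'.1, rfl⟩) ?_
    refine le_csInf ⟨c ⬝ᵥ xbar, ⟨xbar, hopt'.1, rfl⟩⟩ ?_
    rintro y ⟨x, hx, rfl⟩
    exact hopt'.2 x hx
  have hval : c ⬝ᵥ x' = c ⬝ᵥ xbar - δ := by
    rw [← hi₀]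
    simp only [hx', dotProduct, mul_sub, Finset.sum_sub_distrib]
  have hmem : c ⬝ᵥ x' ∈ ((fun x => c ⬝ᵥ x) '' {x | PrunedFeasible A b {j | xbar j = 1} (k : ℝ) x}) :=
    ⟨x', hfeas, rfl⟩
  have hbdd : BddBelow ((fun x => c ⬝ᵥ x) '' {x | PrunedFeasible A b {j | xbar j = 1} (k : ℝ) x}) := by
    refine ⟨0, ?_⟩
    rintro y ⟨x, hx, rfl⟩
    exact Finset.sum_nonneg fun j _ => mul_nonneg (hc j) (hx.2.1 j).1
  calc phiPruned A b c {j | xbar j = 1} (k : ℝ) ≤ c ⬝ᵥ x' := csInf_le hbdd hmem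
    _ = phi A b c ((k : ℝ) + 1) - δ := by rw [hval, hphi]
end

section
/- Suppose that for every j = 1, …, n, P(k) has a binary optimal solution x̂ʲ with x̂ʲ_j = 0. Then φ(λ) = λ·φ(1) for every real λ ∈ [0, k+1]; in particular φ(k+1) = (k+1)·φ(1) and φ(k) = k·φ(1). -/
open Matrix Set

namespace PropB1

/-- A real number is integral. -/
def IsInt (r : ℝ) : Prop := ∃ z : ℤ, r = (z : ℝ)

lemma isInt_signType (s : SignType) : IsInt (s : ℝ) := ⟨(s : ℤ), by cases s <;> simp⟩

lemma isInt_of_signType_range {r : ℝ}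
    (h : r ∈ Set.range (SignType.cast : SignType → ℝ)) : IsInt r := by
  obtain ⟨s, rfl⟩ := h; exact isInt_signType s

lemma IsInt.neg {r : ℝ} (h : IsInt r) : IsInt (-r) := by
  obtain ⟨z, rfl⟩ := h; exact ⟨-z, by push_cast; ring⟩

lemma isInt_sum {α : Type*} (s : Finset α) (f : α → ℝ) (h : ∀ a ∈ s, IsInt (f a)) :
    IsInt (∑ a ∈ s, f a) := by
  classical
  induction s using Finset.induction_on with
  | empty => exact ⟨0, by simp⟩
  | @insert a s' hx ih =>
    obtain ⟨z, hz⟩ := h a (Finset.mem_insert_self a s')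
    obtain ⟨w, hw⟩ := ih (fun b hb => h b (Finset.mem_insert_of_mem hb))
    exact ⟨z + w, by rw [Finset.sum_insert hx, hz, hw]; push_cast; ring⟩

lemma det_isInt {ι : Type} [Fintype ι] [DecidableEq ι] (C : Matrix ι ι ℝ)
    (h : ∀ i j, IsInt (C i j)) : IsInt C.det := by
  choose Z hZ using fun i j => h i j
  have : C = (Matrix.of Z).map (Int.cast : ℤ → ℝ) := by
    ext i j; simp [hZ i j]
  refine ⟨(Matrix.of Z).det, ?_⟩
  rw [this, show ((Matrix.of Z).map (Int.cast : ℤ → ℝ)) = (Int.castRingHom ℝ).mapMatrix (Matrix.of Z) from rfl, ← RingHom.map_det]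
  rfl

lemma tu_solution_int {m : ℕ} {ι : Type} [Fintype ι] [DecidableEq ι]
    (M : Matrix (Fin m) ι ℝ) (hTU : M.IsTotallyUnimodular)
    (hker : ∀ u, M.mulVec u = 0 → u = 0)
    (d : Fin m → ℝ) (hd : ∀ i, IsInt (d i))
    (u : ι → ℝ) (hu : M.mulVec u = d) : ∀ j, IsInt (u j) := by
  classical
  have minj : Function.Injective M.mulVec := by
    intro x y hxy
    have : M.mulVec (x - y) = 0 := by rw [Matrix.mulVec_sub, hxy, sub_self]
    have := hker _ this
    exact sub_eq_zero.mp this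
  have hcols : LinearIndependent ℝ (fun j => Mᵀ j) := Matrix.mulVec_injective_iff.mp minj
  have hrankT : Mᵀ.rank = Fintype.card ι := hcols.rank_matrix
  have hrank : M.rank = Fintype.card ι := by rw [← Matrix.rank_transpose]; exact hrankT
  have hspan : Module.finrank ℝ (Submodule.span ℝ (Set.range M)) = Fintype.card ι := by
    have := Matrix.rank_eq_finrank_span_row M; rw [hrank] at this; exact this.symm
  obtain ⟨bs, hbsub, hbspan, hbind⟩ := exists_linearIndependent ℝ (Set.range M)
  haveI : Fintype bs := ((Set.finite_range M).subset hbsub).fintype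
  have hcard : Fintype.card ι = Fintype.card bs := by
    have h1 := finrank_span_set_eq_card hbind
    rw [hbspan, hspan] at h1
    rw [h1, Set.toFinset_card]
  let e : ι ≃ bs := Fintype.equivOfCardEq hcard
  have hpre : ∀ i : ι, ∃ r : Fin m, M r = ((e i : Set.Elem bs) : ι → ℝ) := fun i => hbsub (e i).2
  choose f hf using hpre
  set B := M.submatrix f id with hB
  have hBrows : ∀ i, B i = ((e i : Set.Elem bs) : ι → ℝ) := by
    intro i; funext j; simp [hB, Matrix.submatrix_apply, hf i]
  have hBind : LinearIndependent ℝ (fun i => B i) := by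
    have : (fun i => B i) = (fun x : bs => (x : ι → ℝ)) ∘ e := by
      funext i; rw [hBrows i]; rfl
    rw [this]
    exact hbind.comp e e.injective
  have hBunit : IsUnit B := by
    rw [← Matrix.vecMul_injective_iff_isUnit]
    exact Matrix.vecMul_injective_iff.mpr hBind
  have hdet : IsUnit B.det := (Matrix.isUnit_iff_isUnit_det B).mp hBunit
  have hdetTU : B.det ∈ Set.range (SignType.cast : SignType → ℝ) := by
    have := (Matrix.isTotallyUnimodular_iff_fintype M).mp hTU ι f id
    exact this
  have hdet1 : B.det = 1 ∨ B.det = -1 := by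
    obtain ⟨s, hs⟩ := hdetTU
    cases s with
    | zero => exfalso; rw [← hs] at hdet; simp at hdet
    | pos => left; rw [← hs]; rfl
    | neg => right; rw [← hs]; rfl
  haveI : Invertible B := B.invertibleOfIsUnitDet hdet
  set d' : ι → ℝ := fun i => d (f i) with hd'
  have hBu : B.mulVec u = d' := by
    funext i
    have : B.mulVec u i = M.mulVec u (f i) := by
      simp [hB, Matrix.mulVec, dotProduct, Matrix.submatrix_apply]
    rw [this, hu]
  have hcram : B.mulVec (Matrix.cramer B d') = B.det • d' := Matrix.mulVec_cramer B d'
  have hBu2 : B.mulVec (B.det • u) = B.det • d' := by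
    rw [Matrix.mulVec_smul, hBu]
  have hueq : B.det • u = Matrix.cramer B d' := by
    apply Matrix.mulVec_injective_of_invertible B
    rw [hBu2, hcram]
  intro j
  have hcramInt : IsInt (Matrix.cramer B d' j) := by
    rw [Matrix.cramer_apply]
    apply det_isInt
    intro i j'
    by_cases hjj : j' = j
    · subst hjj
      rw [Matrix.updateCol_self]
      exact hd (f i)
    · rw [Matrix.updateCol_ne hjj]
      exact isInt_of_signType_range (hTU.apply (f i) (id j'))
  have huj : B.det * u j = Matrix.cramer B d' j := by
    have := congrFun hueq j
    simpa using this
  obtain ⟨z, hz⟩ := hcramInt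
  rcases hdet1 with h1 | h1
  · exact ⟨z, by rw [h1] at huj; simpa using huj.trans hz⟩
  · exact ⟨-z, by rw [h1] at huj; push_cast; rw [← hz, ← huj]; ring⟩


lemma col_sign_tu {X Y : Type*} [DecidableEq X] {M : Matrix X Y ℝ}
    (hM : M.IsTotallyUnimodular) (v : Y → ℝ) (hv : ∀ y, v y = 1 ∨ v y = -1) :
    (Matrix.of fun i j => v j * M i j).IsTotallyUnimodular := by
  rw [Matrix.isTotallyUnimodular_iff]
  intro k f g
  have hsub : (Matrix.of fun i j => v j * M i j).submatrix f g
      = Matrix.of fun i j => (v ∘ g) j * (M.submatrix f g) i j := by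
    ext i j; simp
  rw [hsub, Matrix.det_mul_row]
  obtain ⟨s, hs⟩ := (Matrix.isTotallyUnimodular_iff M).mp hM k f g
  have hprod : (∏ i, (v ∘ g) i) = 1 ∨ (∏ i, (v ∘ g) i) = -1 := by
    refine Finset.prod_induction _ (fun r => r = 1 ∨ r = -1) ?_ (Or.inl rfl) ?_
    · rintro a c (ha | ha) (hc | hc) <;> rw [ha, hc] <;> norm_num
    · intro i _; exact hv (g i)
  rcases hprod with hp | hp <;> rw [hp, ← hs]
  · exact ⟨s, by simp⟩
  · exact ⟨-s, by cases s <;> simp⟩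


lemma extreme_t_int {m n : ℕ} {A : Matrix (Fin m) (Fin n) ℝ} {b : Fin m → ℝ}
    (hb : b ≠ 0) (hTU : AugTU A b) (lo hi : ℤ)
    {p : (Fin n → ℝ) × ℝ}
    (hp : p ∈ Set.extremePoints ℝ {q : (Fin n → ℝ) × ℝ | A.mulVec q.1 = q.2 • b ∧
      (∀ j, 0 ≤ q.1 j ∧ q.1 j ≤ 1) ∧ (lo : ℝ) ≤ q.2 ∧ q.2 ≤ (hi : ℝ)}) :
    IsInt p.2 := by
  classical
  set K : Set ((Fin n → ℝ) × ℝ) := {q : (Fin n → ℝ) × ℝ | A.mulVec q.1 = q.2 • b ∧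
      (∀ j, 0 ≤ q.1 j ∧ q.1 j ≤ 1) ∧ (lo : ℝ) ≤ q.2 ∧ q.2 ≤ (hi : ℝ)} with hK
  obtain ⟨hpK, hpext⟩ := (mem_extremePoints).mp hp
  obtain ⟨x, t⟩ := p
  obtain ⟨h1, h2, h3, h4⟩ : A.mulVec x = t • b ∧ (∀ j, 0 ≤ x j ∧ x j ≤ 1) ∧
      (lo : ℝ) ≤ t ∧ t ≤ (hi : ℝ) := hpK
  by_cases htlo : t = (lo : ℝ)
  · exact ⟨lo, htlo⟩
  by_cases hthi : t = (hi : ℝ)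
  · exact ⟨hi, hthi⟩
  have hlo : (lo : ℝ) < t := lt_of_le_of_ne h3 (Ne.symm htlo)
  have hhi : t < (hi : ℝ) := lt_of_le_of_ne h4 hthi
  set J : Finset (Fin n) := Finset.univ.filter (fun j => x j ≠ 0 ∧ x j ≠ 1) with hJ
  set N : Matrix (Fin m) ({j : Fin n // j ∈ J} ⊕ Unit) ℝ :=
    Matrix.of (fun i q => Sum.elim (fun (j : {j : Fin n // j ∈ J}) => A i (j : Fin n))
      (fun _ => -(b i)) q) with hN
  -- N is totally unimodular
  have hNTU : N.IsTotallyUnimodular := by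
    have hPsub : ((Matrix.fromCols A (Matrix.of fun i (_ : Unit) => b i)).submatrix id
        (Sum.elim (fun (j : {j : Fin n // j ∈ J}) => Sum.inl (j : Fin n))
          (fun u => Sum.inr u))).IsTotallyUnimodular := hTU.submatrix _ _
    have := col_sign_tu hPsub
      (Sum.elim (fun (_ : {j : Fin n // j ∈ J}) => (1:ℝ)) (fun _ => (-1:ℝ)))
      (by rintro (j | u) <;> norm_num)
    convert this using 2 with i q
    ext i q
    rcases q with j | u <;> simp [hN]
  -- computation of N.mulVec
  have hcomp : ∀ (w : ({j : Fin n // j ∈ J} ⊕ Unit) → ℝ),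
      N.mulVec w = A.mulVec (fun j => if hj : j ∈ J then w (Sum.inl ⟨j, hj⟩) else 0)
        - (w (Sum.inr ())) • b := by
    intro w
    funext i
    have e1 : N.mulVec w i
        = (∑ j : {j : Fin n // j ∈ J}, A i (j : Fin n) * w (Sum.inl j))
          + (-(b i)) * w (Sum.inr ()) := by
      simp [hN, Matrix.mulVec, dotProduct, Fintype.sum_sum_type]
    have e2 : A.mulVec (fun j => if hj : j ∈ J then w (Sum.inl ⟨j, hj⟩) else 0) i
        = ∑ j : {j : Fin n // j ∈ J}, A i (j : Fin n) * w (Sum.inl j) := by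
      simp only [Matrix.mulVec, dotProduct]
      rw [← Finset.sum_subset (Finset.subset_univ J)
        (fun j _ hj => by rw [dif_neg hj, mul_zero])]
      rw [← Finset.sum_attach J (fun j => A i j * (if hj : j ∈ J then w (Sum.inl ⟨j, hj⟩) else 0))]
      rw [Finset.univ_eq_attach]
      apply Finset.sum_congr rfl
      intro j _
      simp [j.2]
    rw [e1]
    simp only [Pi.sub_apply, Pi.smul_apply, smul_eq_mul]
    rw [e2]
    ring
  -- trivial kernel
  have hker : ∀ u, N.mulVec u = 0 → u = 0 := by
    intro u hu0
    set dd : Fin n → ℝ := fun j => if hj : j ∈ J then u (Sum.inl ⟨j, hj⟩) else 0 with hdd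
    set s : ℝ := u (Sum.inr ()) with hs
    have hAdd : A.mulVec dd = s • b := by
      have := hcomp u
      rw [hu0] at this
      have := this.symm
      rw [sub_eq_zero] at this
      exact this
    -- choose epsilon
    set C : ℝ := 1 + (∑ j, |dd j|) + |s| with hC
    have hCpos : 0 < C := by
      have h₁ : (0:ℝ) ≤ ∑ j, |dd j| := Finset.sum_nonneg (fun j _ => abs_nonneg _)
      have h₂ : (0:ℝ) ≤ |s| := abs_nonneg _
      linarith
    have hddC : ∀ j, |dd j| ≤ C := by
      intro j
      have h₁ : |dd j| ≤ ∑ j', |dd j'| :=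
        Finset.single_le_sum (fun j' _ => abs_nonneg (dd j')) (Finset.mem_univ j)
      have h₂ : (0:ℝ) ≤ |s| := abs_nonneg _
      simp only [hC]; linarith
    have hsC : |s| ≤ C := by
      have h₁ : (0:ℝ) ≤ ∑ j', |dd j'| := Finset.sum_nonneg (fun j _ => abs_nonneg _)
      simp only [hC]; linarith
    set γ : ℝ := min (min (t - lo) (hi - t))
      (if hJne : J.Nonempty then J.inf' hJne (fun j => min (x j) (1 - x j)) else 1) with hγ
    have hγpos : 0 < γ := by
      apply lt_min
      · exact lt_min (by linarith) (by linarith)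
      · split_ifs with hJne
        · rw [Finset.lt_inf'_iff]
          intro j hj
          have hj' := (Finset.mem_filter.mp hj).2
          have hb0 := (h2 j).1
          have hb1 := (h2 j).2
          apply lt_min
          · exact lt_of_le_of_ne hb0 (Ne.symm hj'.1)
          · have : x j < 1 := lt_of_le_of_ne hb1 hj'.2
            linarith
        · norm_num
    have hγlo : γ ≤ t - lo := le_trans (min_le_left _ _) (min_le_left _ _)
    have hγhi : γ ≤ hi - t := le_trans (min_le_left _ _) (min_le_right _ _)
    have hγx : ∀ j ∈ J, γ ≤ min (x j) (1 - x j) := by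
      intro j hj
      have h₁ : γ ≤ (if hJne : J.Nonempty then J.inf' hJne (fun j => min (x j) (1 - x j)) else 1) :=
        min_le_right _ _
      rw [dif_pos ⟨j, hj⟩] at h₁
      exact le_trans h₁ (Finset.inf'_le _ hj)
    set ε : ℝ := γ / C with hε
    have hεpos : 0 < ε := div_pos hγpos hCpos
    have hεdd : ∀ j, ε * |dd j| ≤ γ := by
      intro j
      calc ε * |dd j| ≤ ε * C := by
            apply mul_le_mul_of_nonneg_left (hddC j) (le_of_lt hεpos)
        _ = γ := by rw [hε, div_mul_cancel₀ _ (ne_of_gt hCpos)]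
    have hεs : ε * |s| ≤ γ := by
      calc ε * |s| ≤ ε * C := mul_le_mul_of_nonneg_left hsC (le_of_lt hεpos)
        _ = γ := by rw [hε, div_mul_cancel₀ _ (ne_of_gt hCpos)]
    -- membership of perturbed points
    have hmem : ∀ σ : ℝ, σ = 1 ∨ σ = -1 → (x + (σ * ε) • dd, t + σ * ε * s) ∈ K := by
      intro σ hσ
      have hσabs : |σ| = 1 := by rcases hσ with h | h <;> rw [h] <;> norm_num
      refine ⟨?_, ?_, ?_, ?_⟩
      · show A.mulVec (x + (σ * ε) • dd) = (t + σ * ε * s) • b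
        rw [Matrix.mulVec_add, Matrix.mulVec_smul, h1, hAdd, smul_smul, add_smul]
      · intro j
        by_cases hj : j ∈ J
        · have habs : |σ * ε * dd j| ≤ γ := by
            rw [abs_mul, abs_mul, hσabs, one_mul, abs_of_pos hεpos]
            exact hεdd j
          have h₁ := (abs_le.mp habs).1
          have h₂ := (abs_le.mp habs).2
          have hγj := hγx j hj
          have hγj1 : γ ≤ x j := le_trans hγj (min_le_left _ _)
          have hγj2 : γ ≤ 1 - x j := le_trans hγj (min_le_right _ _)
          constructor
          · show 0 ≤ x j + (σ * ε) * dd j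
            nlinarith [h₁, hγj1]
          · show x j + (σ * ε) * dd j ≤ 1
            nlinarith [h₂, hγj2]
        · have hdd0 : dd j = 0 := by simp [hdd, hj]
          show 0 ≤ x j + (σ * ε) * dd j ∧ x j + (σ * ε) * dd j ≤ 1
          rw [hdd0]
          simpa using h2 j
      · show (lo : ℝ) ≤ t + σ * ε * s
        have habs : |σ * ε * s| ≤ γ := by
          rw [abs_mul, abs_mul, hσabs, one_mul, abs_of_pos hεpos]
          exact hεs
        have := (abs_le.mp habs).1
        linarith
      · show t + σ * ε * s ≤ (hi : ℝ)
        have habs : |σ * ε * s| ≤ γ := by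
          rw [abs_mul, abs_mul, hσabs, one_mul, abs_of_pos hεpos]
          exact hεs
        have := (abs_le.mp habs).2
        linarith
    have hqp := hmem 1 (Or.inl rfl)
    have hqm := hmem (-1) (Or.inr rfl)
    have hseg : (x, t) ∈ openSegment ℝ (x + (1 * ε) • dd, t + 1 * ε * s)
        (x + ((-1) * ε) • dd, t + (-1) * ε * s) := by
      refine ⟨1/2, 1/2, by norm_num, by norm_num, by norm_num, ?_⟩
      apply Prod.ext
      · show (1/2 : ℝ) • (x + (1 * ε) • dd) + (1/2 : ℝ) • (x + ((-1) * ε) • dd) = x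
        funext j
        simp only [Pi.add_apply, Pi.smul_apply, smul_eq_mul]
        ring
      · show (1/2 : ℝ) * (t + 1 * ε * s) + (1/2 : ℝ) * (t + (-1) * ε * s) = t
        ring
    obtain ⟨heq1, -⟩ := hpext _ hqp _ hqm hseg
    have hxeq : x + (1 * ε) • dd = x := congrArg Prod.fst heq1
    have hteq : t + 1 * ε * s = t := congrArg Prod.snd heq1
    have hdd0 : dd = 0 := by
      have : (1 * ε) • dd = 0 := by
        have := hxeq
        rwa [add_eq_left] at this
      rcases smul_eq_zero.mp this with h | h
      · exfalso; rw [one_mul] at h; exact ne_of_gt hεpos h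
      · exact h
    have hs0 : s = 0 := by
      have : 1 * ε * s = 0 := by linarith
      rcases mul_eq_zero.mp this with h | h
      · exfalso; rw [one_mul] at h; exact ne_of_gt hεpos h
      · exact h
    funext q
    rcases q with j | u'
    · have : dd (j : Fin n) = u (Sum.inl j) := by
        rw [hdd]
        simp [j.2]
      rw [show u (Sum.inl j) = dd (j : Fin n) from this.symm, hdd0]
      rfl
    · cases u'
      rw [show u (Sum.inr ()) = s from rfl, hs0]
      rfl
  -- the system
  set Ones : Finset (Fin n) := Finset.univ.filter (fun j => x j = 1) with hOnes
  set d₀ : Fin m → ℝ := fun i => -∑ j ∈ Ones, A i j with hd₀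
  have hd₀int : ∀ i, IsInt (d₀ i) := by
    intro i
    apply IsInt.neg
    apply isInt_sum
    intro j _
    have := hTU.apply i (Sum.inl j)
    rw [Matrix.fromCols_apply_inl] at this
    exact isInt_of_signType_range this
  set u₀ : ({j : Fin n // j ∈ J} ⊕ Unit) → ℝ :=
    Sum.elim (fun j => x (j : Fin n)) (fun _ => t) with hu₀
  have hsys : N.mulVec u₀ = d₀ := by
    rw [hcomp u₀]
    funext i
    have hsplit : ∀ j, x j = (if hj : j ∈ J then u₀ (Sum.inl ⟨j, hj⟩) else 0)
        + (if x j = 1 then 1 else 0) := by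
      intro j
      by_cases hj : j ∈ J
      · have hj' := (Finset.mem_filter.mp hj).2
        rw [dif_pos hj, if_neg hj'.2]
        simp [hu₀]
      · have : x j = 0 ∨ x j = 1 := by
          by_contra hcon
          push_neg at hcon
          exact hj (Finset.mem_filter.mpr ⟨Finset.mem_univ j, hcon⟩)
        rw [dif_neg hj]
        rcases this with h | h <;> rw [h] <;> norm_num
    have hA1 : A.mulVec x i = A.mulVec (fun j => if hj : j ∈ J then u₀ (Sum.inl ⟨j, hj⟩) else 0) i
        + ∑ j ∈ Ones, A i j := by
      simp only [Matrix.mulVec, dotProduct]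
      rw [hOnes, Finset.sum_filter]
      rw [← Finset.sum_add_distrib]
      apply Finset.sum_congr rfl
      intro j _
      conv_lhs => rw [hsplit j]
      rw [mul_add, mul_ite, mul_one, mul_zero]
    have hAx : A.mulVec x i = t * b i := by rw [h1]; rfl
    have : A.mulVec (fun j => if hj : j ∈ J then u₀ (Sum.inl ⟨j, hj⟩) else 0) i
        = t * b i - ∑ j ∈ Ones, A i j := by linarith
    simp only [Pi.sub_apply, Pi.smul_apply, smul_eq_mul, this, hd₀]
    rw [show u₀ (Sum.inr ()) = t from rfl]
    ring
  have := tu_solution_int N hNTU hker d₀ hd₀int u₀ hsys (Sum.inr ())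
  exact this


lemma key {m n : ℕ} {A : Matrix (Fin m) (Fin n) ℝ} {b : Fin m → ℝ} {c : Fin n → ℝ}
    (hb : b ≠ 0) (hTU : AugTU A b) (k : ℕ) (hk : 0 < k) (v : ℝ)
    (hvmin : ∀ x', PFeasible A b (k : ℝ) x' → v ≤ c ⬝ᵥ x')
    (ε₀ : ℝ) (hε₀ : 0 < ε₀) (hε₁ : ε₀ ≤ 1)
    (y : Fin n → ℝ) (hy : PFeasible A b ((k : ℝ) + ε₀) y)
    (hcy : c ⬝ᵥ y = ((k : ℝ) + ε₀) / (k : ℝ) * v)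
    (δ : ℝ) (hδ : 0 < δ) :
    ∃ xs : Fin n → ℝ, PFeasible A b ((k : ℝ) + 1) xs ∧
      c ⬝ᵥ xs ≤ ((k : ℝ) + 1) / (k : ℝ) * v + δ := by
  classical
  have hkR : (0 : ℝ) < (k : ℝ) := by exact_mod_cast hk
  have hcast1 : (((k : ℤ) : ℝ)) = (k : ℝ) := by push_cast; ring
  have hcast2 : ((((k : ℤ) + 1) : ℤ) : ℝ) = (k : ℝ) + 1 := by push_cast; ring
  set μ : ℝ := v / (k : ℝ) + δ with hμ
  set K : Set ((Fin n → ℝ) × ℝ) := {q : (Fin n → ℝ) × ℝ | A.mulVec q.1 = q.2 • b ∧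
      (∀ j, 0 ≤ q.1 j ∧ q.1 j ≤ 1) ∧ (((k : ℤ) : ℤ) : ℝ) ≤ q.2 ∧
      q.2 ≤ ((((k : ℤ) + 1) : ℤ) : ℝ)} with hK
  -- the reference point
  have hyK : (y, (k : ℝ) + ε₀) ∈ K := by
    refine ⟨hy.1, hy.2, ?_, ?_⟩
    · rw [hcast1]; show (k:ℝ) ≤ (k:ℝ) + ε₀; linarith
    · rw [hcast2]; show (k:ℝ) + ε₀ ≤ (k:ℝ) + 1; linarith
  -- compactness
  have hKsub : K ⊆ (Set.pi Set.univ fun _ : Fin n => Set.Icc (0:ℝ) 1) ×ˢ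
      Set.Icc ((k:ℝ)) ((k:ℝ)+1) := by
    rintro ⟨xq, tq⟩ ⟨-, hbox, hlo, hhi⟩
    rw [hcast1] at hlo; rw [hcast2] at hhi
    exact ⟨fun j _ => ⟨(hbox j).1, (hbox j).2⟩, hlo, hhi⟩
  have hKclosed : IsClosed K := by
    have hc1 : Continuous fun q : (Fin n → ℝ) × ℝ => A.mulVec q.1 := by
      apply continuous_pi
      intro i
      simp only [Matrix.mulVec, dotProduct]
      exact continuous_finset_sum _ fun j _ =>
        continuous_const.mul ((continuous_apply j).comp continuous_fst)
    have hc2 : Continuous fun q : (Fin n → ℝ) × ℝ => q.2 • b :=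
      continuous_snd.smul continuous_const
    have h1 : IsClosed {q : (Fin n → ℝ) × ℝ | A.mulVec q.1 = q.2 • b} := isClosed_eq hc1 hc2
    have h2 : IsClosed {q : (Fin n → ℝ) × ℝ | ∀ j, 0 ≤ q.1 j ∧ q.1 j ≤ 1} := by
      have : {q : (Fin n → ℝ) × ℝ | ∀ j, 0 ≤ q.1 j ∧ q.1 j ≤ 1}
          = ⋂ j, ({q : (Fin n → ℝ) × ℝ | 0 ≤ q.1 j} ∩ {q | q.1 j ≤ 1}) := by
        ext q; simp [Set.mem_iInter, forall_and]
      rw [this]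
      refine isClosed_iInter fun j => IsClosed.inter ?_ ?_
      · exact isClosed_le continuous_const ((continuous_apply j).comp continuous_fst)
      · exact isClosed_le ((continuous_apply j).comp continuous_fst) continuous_const
    have h3 : IsClosed {q : (Fin n → ℝ) × ℝ | (((k : ℤ) : ℤ) : ℝ) ≤ q.2} :=
      isClosed_le continuous_const continuous_snd
    have h4 : IsClosed {q : (Fin n → ℝ) × ℝ | q.2 ≤ ((((k : ℤ) + 1) : ℤ) : ℝ)} :=
      isClosed_le continuous_snd continuous_const
    have : K = {q : (Fin n → ℝ) × ℝ | A.mulVec q.1 = q.2 • b}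
        ∩ ({q | ∀ j, 0 ≤ q.1 j ∧ q.1 j ≤ 1}
          ∩ ({q : (Fin n → ℝ) × ℝ | (((k : ℤ) : ℤ) : ℝ) ≤ q.2}
            ∩ {q : (Fin n → ℝ) × ℝ | q.2 ≤ ((((k : ℤ) + 1) : ℤ) : ℝ)})) := by
      ext q; constructor
      · rintro ⟨a1, a2, a3, a4⟩; exact ⟨a1, a2, a3, a4⟩
      · rintro ⟨a1, a2, a3, a4⟩; exact ⟨a1, a2, a3, a4⟩
    rw [this]
    exact h1.inter (h2.inter (h3.inter h4))
  have hKcomp : IsCompact K := IsCompact.of_isClosed_subset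
    ((isCompact_univ_pi fun _ => isCompact_Icc).prod isCompact_Icc) hKclosed hKsub
  -- the linear functional
  set lin : ((Fin n → ℝ) × ℝ) →ₗ[ℝ] ℝ := {
    toFun := fun q => μ * q.2 - c ⬝ᵥ q.1
    map_add' := by
      intro p q
      simp only [Prod.fst_add, Prod.snd_add, add_dotProduct, dotProduct_add]
      ring
    map_smul' := by
      intro a q
      simp only [Prod.smul_fst, Prod.smul_snd, dotProduct_smul, smul_eq_mul,
        RingHom.id_apply]
      ring } with hlin
  set l : ((Fin n → ℝ) × ℝ) →L[ℝ] ℝ := LinearMap.toContinuousLinearMap lin with hl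
  have hlval : ∀ q : (Fin n → ℝ) × ℝ, l q = μ * q.2 - c ⬝ᵥ q.1 := fun q => rfl
  -- maximize l on K
  obtain ⟨p₁, hp₁K, hp₁max⟩ := hKcomp.exists_isMaxOn ⟨_, hyK⟩ l.continuous.continuousOn
  set F : Set ((Fin n → ℝ) × ℝ) := {q ∈ K | ∀ r ∈ K, l r ≤ l q} with hF
  have hFexp : IsExposed ℝ K F := fun _ => ⟨l, rfl⟩
  have hFne : F.Nonempty := ⟨p₁, hp₁K, fun r hr => hp₁max hr⟩
  have hFcomp : IsCompact F := hFexp.isCompact hKcomp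
  obtain ⟨ps, hps⟩ := hFcomp.extremePoints_nonempty hFne
  have hpsF : ps ∈ F := extremePoints_subset hps
  have hpsK : ps ∈ K := hpsF.1
  have hpsmax : ∀ r ∈ K, l r ≤ l ps := hpsF.2
  have hpsKext : ps ∈ K.extremePoints ℝ :=
    (hFexp.isExtreme).extremePoints_subset_extremePoints hps
  -- integrality of the t-coordinate
  obtain ⟨z, hz⟩ := extreme_t_int hb hTU (k : ℤ) ((k : ℤ) + 1) hpsKext
  obtain ⟨hfeas, hbox, hlo, hhi⟩ := hpsK
  rw [hcast1] at hlo; rw [hcast2] at hhi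
  have hzcase : z = (k : ℤ) ∨ z = (k : ℤ) + 1 := by
    have h1 : ((k : ℤ) : ℝ) ≤ (z : ℝ) := by rw [hcast1, ← hz]; exact hlo
    have h2 : (z : ℝ) ≤ (((k : ℤ) + 1 : ℤ) : ℝ) := by rw [hcast2, ← hz]; exact hhi
    have h1' : (k : ℤ) ≤ z := by exact_mod_cast h1
    have h2' : z ≤ (k : ℤ) + 1 := by exact_mod_cast h2
    omega
  -- value of l at the reference point
  have hly : l (y, (k : ℝ) + ε₀) = δ * ((k : ℝ) + ε₀) := by
    rw [hlval]
    simp only [hμ]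
    rw [hcy]
    field_simp
    ring
  have hlps : l (y, (k : ℝ) + ε₀) ≤ l ps := hpsmax _ hyK
  have hA : δ * ((k : ℝ) + ε₀) ≤ l ps := by rw [← hly]; exact hlps
  have hB : l ps = μ * ps.2 - c ⬝ᵥ ps.1 := hlval ps
  rw [hB] at hA
  clear hB hlps hly hp₁K hp₁max hpsmax hpsF hps hpsKext hFcomp hFne hFexp hKcomp hKclosed
    hKsub hyK hlval
  clear_value F l lin K
  clear hF hl hlin hK
  clear F l lin K
  rcases hzcase with hzk | hzk1
  · -- t* = k : contradiction
    exfalso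
    have htps : ps.2 = (k : ℝ) := by rw [hz, hzk]; exact hcast1
    have hfeasps : PFeasible A b (k : ℝ) ps.1 := ⟨by rw [← htps]; exact hfeas, hbox⟩
    have hvle : v ≤ c ⬝ᵥ ps.1 := hvmin _ hfeasps
    rw [htps] at hA
    have hμk : μ * (k : ℝ) = v + δ * (k : ℝ) := by
      rw [hμ, add_mul, div_mul_cancel₀ _ (ne_of_gt hkR)]
    rw [hμk] at hA
    have hexp : δ * ((k : ℝ) + ε₀) = δ * (k : ℝ) + δ * ε₀ := by ring
    have hpos : 0 < δ * ε₀ := mul_pos hδ hε₀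
    linarith
  · -- t* = k + 1
    have htps : ps.2 = (k : ℝ) + 1 := by rw [hz, hzk1]; exact hcast2
    refine ⟨ps.1, ⟨by rw [← htps]; exact hfeas, hbox⟩, ?_⟩
    rw [htps] at hA
    have h2 : μ * ((k : ℝ) + 1) = ((k : ℝ) + 1) / (k : ℝ) * v + δ * ((k : ℝ) + 1) := by
      rw [hμ]
      field_simp
    rw [h2] at hA
    have hexp : δ * ((k : ℝ) + ε₀) = δ * (k : ℝ) + δ * ε₀ := by ring
    have hexp2 : δ * ((k : ℝ) + 1) = δ * (k : ℝ) + δ * 1 := by ring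
    have hpos : 0 < δ * ε₀ := mul_pos hδ hε₀
    have hpos2 : δ * ε₀ ≤ δ * 1 := by
      apply mul_le_mul_of_nonneg_left hε₁ (le_of_lt hδ)
    linarith


section Helpers

variable {m n : ℕ} {A : Matrix (Fin m) (Fin n) ℝ} {b : Fin m → ℝ} {c : Fin n → ℝ}

lemma dot_nonneg {x : Fin n → ℝ} (hc : ∀ j, 0 ≤ c j) (hx : ∀ j, 0 ≤ x j) :
    0 ≤ c ⬝ᵥ x :=
  Finset.sum_nonneg fun j _ => mul_nonneg (hc j) (hx j)

lemma phi_bddBelow (hc : ∀ j, 0 ≤ c j) (lam : ℝ) :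
    BddBelow ((fun x => c ⬝ᵥ x) '' {x | PFeasible A b lam x}) := by
  refine ⟨0, ?_⟩
  rintro r ⟨x, hx, rfl⟩
  exact dot_nonneg hc (fun j => (hx.2 j).1)

lemma phi_le (hc : ∀ j, 0 ≤ c j) {lam : ℝ} {x : Fin n → ℝ}
    (hx : PFeasible A b lam x) : phi A b c lam ≤ c ⬝ᵥ x :=
  csInf_le (phi_bddBelow hc lam) ⟨x, hx, rfl⟩

lemma le_phi {lam r : ℝ} (hne : ∃ x, PFeasible A b lam x)
    (hall : ∀ x, PFeasible A b lam x → r ≤ c ⬝ᵥ x) : r ≤ phi A b c lam := by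
  apply le_csInf
  · obtain ⟨x, hx⟩ := hne; exact ⟨c ⬝ᵥ x, x, hx, rfl⟩
  · rintro s ⟨x, hx, rfl⟩; exact hall x hx

lemma feas_smul {lam r : ℝ} {x : Fin n → ℝ} (hx : PFeasible A b lam x)
    (hr0 : 0 ≤ r) (hr1 : r ≤ 1) : PFeasible A b (r * lam) (r • x) := by
  constructor
  · rw [Matrix.mulVec_smul, hx.1, smul_smul]
  · intro j
    constructor
    · exact mul_nonneg hr0 (hx.2 j).1
    · calc r * x j ≤ r * 1 := mul_le_mul_of_nonneg_left (hx.2 j).2 hr0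
        _ ≤ 1 := by linarith

lemma feas_comb {lam₁ lam₂ a a' : ℝ} {x y : Fin n → ℝ} (hx : PFeasible A b lam₁ x)
    (hy : PFeasible A b lam₂ y) (ha : 0 ≤ a) (ha' : 0 ≤ a') (haa : a + a' = 1) :
    PFeasible A b (a * lam₁ + a' * lam₂) (a • x + a' • y) := by
  constructor
  · rw [Matrix.mulVec_add, Matrix.mulVec_smul, Matrix.mulVec_smul, hx.1, hy.1,
      smul_smul, smul_smul, add_smul]
  · intro j
    have h1 := (hx.2 j).1; have h2 := (hx.2 j).2
    have h3 := (hy.2 j).1; have h4 := (hy.2 j).2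
    constructor
    · show 0 ≤ a * x j + a' * y j
      have := mul_nonneg ha h1; have := mul_nonneg ha' h3
      positivity
    · show a * x j + a' * y j ≤ 1
      have e1 : a * x j ≤ a * 1 := mul_le_mul_of_nonneg_left h2 ha
      have e2 : a' * y j ≤ a' * 1 := mul_le_mul_of_nonneg_left h4 ha'
      linarith

lemma dot_smul' (r : ℝ) (x : Fin n → ℝ) : c ⬝ᵥ (r • x) = r * (c ⬝ᵥ x) := by
  simp [dotProduct, Finset.mul_sum, Pi.smul_apply, smul_eq_mul]
  apply Finset.sum_congr rfl
  intro j _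
  ring

lemma dot_add' (x y : Fin n → ℝ) : c ⬝ᵥ (x + y) = c ⬝ᵥ x + c ⬝ᵥ y := by
  simp [dotProduct, Finset.sum_add_distrib, Pi.add_apply, mul_add]

end Helpers


theorem main_result {m n : ℕ} (A : Matrix (Fin m) (Fin n) ℝ) (b : Fin m → ℝ) (c : Fin n → ℝ)
    (hb : b ≠ 0) (hc : ∀ j, 0 ≤ c j) (hTU : AugTU A b)
    (k : ℕ) (hk : 0 < k)
    (h : ∀ j : Fin n, ∃ x : Fin n → ℝ,
      IsBinary x ∧ POptimal A b c (k : ℝ) x ∧ x j = 0) :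
    (∀ lam : ℝ, 0 ≤ lam → lam ≤ (k : ℝ) + 1 →
      phi A b c lam = lam * phi A b c 1) ∧
    phi A b c ((k : ℝ) + 1) = ((k : ℝ) + 1) * phi A b c 1 ∧
    phi A b c (k : ℝ) = (k : ℝ) * phi A b c 1 := by
  classical
  have hkR : (0 : ℝ) < (k : ℝ) := by exact_mod_cast hk
  have hkne : ((k : ℝ)) ≠ 0 := ne_of_gt hkR
  have hk1R : (1 : ℝ) ≤ (k : ℝ) := by exact_mod_cast hk
  rcases Nat.eq_zero_or_pos n with hn | hn
  · -- degenerate case n = 0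
    subst hn
    have hmv : ∀ x : Fin 0 → ℝ, A.mulVec x = 0 := by
      intro x; funext i; simp [Matrix.mulVec, dotProduct]
    have hphi : ∀ lam : ℝ, phi A b c lam = 0 := by
      intro lam
      by_cases hlam : lam = 0
      · subst hlam
        have hset : ((fun x => c ⬝ᵥ x) '' {x : Fin 0 → ℝ | PFeasible A b 0 x}) = {0} := by
          apply Set.eq_singleton_iff_unique_mem.mpr
          constructor
          · exact ⟨fun j => j.elim0, ⟨by rw [hmv]; simp, fun j => j.elim0⟩,
              by simp [dotProduct]⟩
          · rintro r ⟨x, hx, rfl⟩; simp [dotProduct]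
        rw [phi, hset, csInf_singleton]
      · have hset : ({x : Fin 0 → ℝ | PFeasible A b lam x}) = ∅ := by
          ext x
          simp only [Set.mem_setOf_eq, Set.mem_empty_iff_false, iff_false]
          rintro ⟨h1, -⟩
          rw [hmv] at h1
          exact (smul_ne_zero hlam hb) h1.symm
        rw [phi, hset, Set.image_empty, Real.sInf_empty]
    exact ⟨fun lam _ _ => by rw [hphi, hphi, mul_zero],
      by rw [hphi, hphi, mul_zero], by rw [hphi, hphi, mul_zero]⟩
  -- main case n > 0
  choose xh hxbin hxopt hxzero using h
  obtain ⟨v, hv⟩ : ∃ r : ℝ, r = phi A b c (k : ℝ) := ⟨_, rfl⟩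
  have hval : ∀ j, c ⬝ᵥ xh j = v := by
    intro j
    rw [hv]
    apply le_antisymm
    · exact le_phi ⟨xh j, (hxopt j).1⟩ (fun x' hx' => (hxopt j).2 x' hx')
    · exact phi_le hc (hxopt j).1
  have hvmin : ∀ x', PFeasible A b (k : ℝ) x' → v ≤ c ⬝ᵥ x' := fun x' hx' => by
    rw [hv]; exact phi_le hc hx'
  set j₀ : Fin n := ⟨0, hn⟩ with hj₀
  obtain ⟨xhat, hxhat⟩ : ∃ z : Fin n → ℝ, z = xh j₀ := ⟨_, rfl⟩
  have hxhatfeas : PFeasible A b (k : ℝ) xhat := by rw [hxhat]; exact (hxopt j₀).1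
  have hcxhat : c ⬝ᵥ xhat = v := by rw [hxhat]; exact hval j₀
  have hnR : (0 : ℝ) < (n : ℝ) := by exact_mod_cast hn
  have hnne : ((n : ℝ)) ≠ 0 := ne_of_gt hnR
  obtain ⟨ε₀, hε₀def⟩ : ∃ r : ℝ, r = 1 / (n : ℝ) := ⟨_, rfl⟩
  have hε₀pos : 0 < ε₀ := by rw [hε₀def]; positivity
  have hε₀le1 : ε₀ ≤ 1 := by
    rw [hε₀def]
    rw [div_le_one hnR]
    exact_mod_cast hn
  -- the averaged point
  obtain ⟨xbar, hxbar⟩ : ∃ z : Fin n → ℝ, z = (n : ℝ)⁻¹ • ∑ j, xh j := ⟨_, rfl⟩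
  have hxbar_mul : A.mulVec xbar = (k : ℝ) • b := by
    rw [hxbar, Matrix.mulVec_smul]
    have hsum : A.mulVec (∑ j, xh j) = ∑ j : Fin n, A.mulVec (xh j) := by
      have h0 := map_sum A.mulVecLin xh Finset.univ
      simp only [Matrix.mulVecLin_apply] at h0
      exact h0
    rw [hsum]
    have hterm : ∀ j : Fin n, A.mulVec (xh j) = (k : ℝ) • b := fun j => (hxopt j).1.1
    rw [Finset.sum_congr rfl (fun j _ => hterm j), Finset.sum_const, Finset.card_univ,
      Fintype.card_fin, ← Nat.cast_smul_eq_nsmul ℝ n ((k : ℝ) • b), smul_smul,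
      inv_mul_cancel₀ hnne, one_smul]
  have hxbar_nonneg : ∀ i, 0 ≤ xbar i := by
    intro i
    rw [hxbar]
    have : (0:ℝ) ≤ ∑ j, xh j i :=
      Finset.sum_nonneg fun j _ => ((hxopt j).1.2 i).1
    have h2 : (∑ j : Fin n, xh j) i = ∑ j, xh j i := by simp
    simp only [Pi.smul_apply, smul_eq_mul, h2]
    positivity
  have hxbar_bound : ∀ i, xbar i ≤ 1 - ε₀ := by
    intro i
    have hsum_le : ∑ j, xh j i ≤ (n : ℝ) - 1 := by
      have h1 : ∀ j : Fin n, xh j i ≤ (if j = i then (0:ℝ) else 1) := by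
        intro j
        by_cases hji : j = i
        · rw [if_pos hji, hji]; rw [hji] at hji ⊢; exact le_of_eq (hxzero i)
        · rw [if_neg hji]; exact ((hxopt j).1.2 i).2
      have h2 : ∑ j, xh j i ≤ ∑ j : Fin n, (if j = i then (0:ℝ) else 1) :=
        Finset.sum_le_sum fun j _ => h1 j
      have h3 : ∑ j : Fin n, (if j = i then (0:ℝ) else 1)
          = ∑ j : Fin n, ((1:ℝ) - (if j = i then 1 else 0)) := by
        apply Finset.sum_congr rfl
        intro j _
        split_ifs <;> ring
      have h4 : ∑ j : Fin n, ((1:ℝ) - (if j = i then 1 else 0))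
          = (n : ℝ) - 1 := by
        rw [Finset.sum_sub_distrib, Finset.sum_const, Finset.card_univ, Fintype.card_fin,
          Finset.sum_ite_eq' Finset.univ i (fun _ => (1:ℝ))]
        simp
      rw [h3, h4] at h2
      exact h2
    have h2 : (∑ j : Fin n, xh j) i = ∑ j, xh j i := by simp
    rw [hxbar]
    simp only [Pi.smul_apply, smul_eq_mul, h2]
    rw [hε₀def]
    have := mul_le_mul_of_nonneg_left hsum_le (le_of_lt (inv_pos.mpr hnR))
    calc (n:ℝ)⁻¹ * ∑ j, xh j i ≤ (n:ℝ)⁻¹ * ((n:ℝ) - 1) := this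
      _ = 1 - 1 / (n:ℝ) := by field_simp
  have hcxbar : c ⬝ᵥ xbar = v := by
    rw [hxbar, dot_smul']
    have : c ⬝ᵥ (∑ j, xh j) = ∑ j, c ⬝ᵥ (xh j) := by
      simp only [dotProduct, Finset.sum_apply, Finset.mul_sum]
      exact Finset.sum_comm
    rw [this, Finset.sum_congr rfl (fun j _ => hval j), Finset.sum_const, Finset.card_univ,
      Fintype.card_fin, nsmul_eq_mul]
    field_simp
  -- the reference point y
  obtain ⟨w, hw⟩ : ∃ z : Fin n → ℝ, z = (k : ℝ)⁻¹ • xhat := ⟨_, rfl⟩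
  have hwfeas : PFeasible A b 1 w := by
    rw [hw]
    have := feas_smul hxhatfeas (le_of_lt (inv_pos.mpr hkR)) (inv_le_one_of_one_le₀ hk1R)
    rwa [inv_mul_cancel₀ hkne] at this
  have hcw : c ⬝ᵥ w = v / (k : ℝ) := by
    rw [hw, dot_smul', hcxhat, inv_mul_eq_div]
  obtain ⟨y, hy'⟩ : ∃ z : Fin n → ℝ, z = xbar + ε₀ • w := ⟨_, rfl⟩
  have hyfeas : PFeasible A b ((k : ℝ) + ε₀) y := by
    constructor
    · rw [hy', Matrix.mulVec_add, Matrix.mulVec_smul, hxbar_mul, hwfeas.1, smul_smul,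
        mul_one, add_smul]
    · intro j
      have h1 := hxbar_nonneg j
      have h2 := hxbar_bound j
      have h3 := (hwfeas.2 j).1
      have h4 := (hwfeas.2 j).2
      rw [hy']
      simp only [Pi.add_apply, Pi.smul_apply, smul_eq_mul]
      constructor
      · show 0 ≤ xbar j + ε₀ * w j
        have := mul_nonneg (le_of_lt hε₀pos) h3
        linarith
      · show xbar j + ε₀ * w j ≤ 1
        have : ε₀ * w j ≤ ε₀ * 1 := mul_le_mul_of_nonneg_left h4 (le_of_lt hε₀pos)
        linarith
  have hcy : c ⬝ᵥ y = ((k : ℝ) + ε₀) / (k : ℝ) * v := by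
    rw [hy', dot_add', dot_smul', hcxbar, hcw]
    field_simp
  -- apply the key lemma
  have hKey : ∀ δ : ℝ, 0 < δ → ∃ xs, PFeasible A b ((k : ℝ) + 1) xs ∧
      c ⬝ᵥ xs ≤ ((k : ℝ) + 1) / (k : ℝ) * v + δ :=
    fun δ hδ => key hb hTU k hk v hvmin ε₀ hε₀pos hε₀le1 y hyfeas hcy δ hδ
  obtain ⟨x₁, hx₁, -⟩ := hKey 1 one_pos
  have hS1ne : ∃ x, PFeasible A b ((k : ℝ) + 1) x := ⟨x₁, hx₁⟩
  have hphik1_le : phi A b c ((k : ℝ) + 1) ≤ ((k : ℝ) + 1) / (k : ℝ) * v := by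
    apply le_of_forall_pos_le_add
    intro δ hδ
    obtain ⟨xs, hxs, hcxs⟩ := hKey δ hδ
    exact le_trans (phi_le hc hxs) hcxs
  obtain ⟨φ1, hφ1def⟩ : ∃ r : ℝ, r = phi A b c 1 := ⟨_, rfl⟩
  have hφ1_le : φ1 ≤ v / (k : ℝ) := by
    rw [hφ1def, ← hcw]
    exact phi_le hc hwfeas
  -- scaling lower bound
  have hlower : ∀ lam : ℝ, 1 ≤ lam → (∃ x, PFeasible A b lam x) →
      lam * φ1 ≤ phi A b c lam := by
    intro lam hlam hne
    have h0lam : (0:ℝ) < lam := lt_of_lt_of_le one_pos hlam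
    apply le_phi hne
    intro x hx
    have hfeasx : PFeasible A b 1 (lam⁻¹ • x) := by
      have := feas_smul hx (le_of_lt (inv_pos.mpr h0lam)) (inv_le_one_of_one_le₀ hlam)
      rwa [inv_mul_cancel₀ (ne_of_gt h0lam)] at this
    have hle : φ1 ≤ lam⁻¹ * (c ⬝ᵥ x) := by
      rw [hφ1def, ← dot_smul']
      exact phi_le hc hfeasx
    have := mul_le_mul_of_nonneg_left hle (le_of_lt h0lam)
    calc lam * φ1 ≤ lam * (lam⁻¹ * (c ⬝ᵥ x)) := this
      _ = c ⬝ᵥ x := by rw [← mul_assoc, mul_inv_cancel₀ (ne_of_gt h0lam), one_mul]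
  have hφk_ge : (k : ℝ) * φ1 ≤ v := by
    have := hlower (k : ℝ) hk1R ⟨xhat, hxhatfeas⟩
    rwa [← hv] at this
  -- the reverse bound φ1 ≥ v/k
  have hφ1_ge : v / (k : ℝ) ≤ φ1 := by
    by_cases hk1 : k = 1
    · subst hk1
      rw [hv, hφ1def]
      norm_num
    · have hk2 : (2 : ℝ) ≤ (k : ℝ) := by
        have : 2 ≤ k := by omega
        exact_mod_cast this
      have h1t : (0:ℝ) < 1 - (k : ℝ)⁻¹ := by
        have : (k:ℝ)⁻¹ < 1 := by
          rw [inv_lt_one_iff₀]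
          right; linarith
        linarith
      have hcombeq : (k : ℝ)⁻¹ * 1 + (1 - (k : ℝ)⁻¹) * ((k : ℝ) + 1) = (k : ℝ) := by
        field_simp; ring
      -- step A and B
      have hstep : ∀ y', PFeasible A b 1 y' →
          v ≤ (k : ℝ)⁻¹ * (c ⬝ᵥ y') + (1 - (k : ℝ)⁻¹) * phi A b c ((k : ℝ) + 1) := by
        intro y' hy'feas
        have hineq : ∀ x', PFeasible A b ((k : ℝ) + 1) x' →
            v ≤ (k : ℝ)⁻¹ * (c ⬝ᵥ y') + (1 - (k : ℝ)⁻¹) * (c ⬝ᵥ x') := by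
          intro x' hx'feas
          have hcombfeas := feas_comb hy'feas hx'feas (le_of_lt (inv_pos.mpr hkR))
            (le_of_lt h1t) (by ring)
          rw [hcombeq] at hcombfeas
          have := hvmin _ hcombfeas
          rwa [dot_add', dot_smul', dot_smul'] at this
        have hr : (v - (k : ℝ)⁻¹ * (c ⬝ᵥ y')) / (1 - (k : ℝ)⁻¹) ≤ phi A b c ((k : ℝ) + 1) := by
          apply le_phi hS1ne
          intro x' hx'feas
          rw [div_le_iff₀ h1t]
          have := hineq x' hx'feas
          linarith [mul_comm (1 - (k : ℝ)⁻¹) (c ⬝ᵥ x')]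
        rw [div_le_iff₀ h1t] at hr
        linarith [mul_comm (phi A b c ((k : ℝ) + 1)) (1 - (k : ℝ)⁻¹)]
      -- step C
      have hC : (k : ℝ) * (v - (1 - (k : ℝ)⁻¹) * phi A b c ((k : ℝ) + 1)) ≤ φ1 := by
        rw [hφ1def]
        apply le_phi ⟨w, hwfeas⟩
        intro y' hy'feas
        have := hstep y' hy'feas
        have h2 : v - (1 - (k : ℝ)⁻¹) * phi A b c ((k : ℝ) + 1) ≤ (k : ℝ)⁻¹ * (c ⬝ᵥ y') := by
          linarith
        have := mul_le_mul_of_nonneg_left h2 (le_of_lt hkR)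
        calc (k : ℝ) * (v - (1 - (k : ℝ)⁻¹) * phi A b c ((k : ℝ) + 1))
            ≤ (k : ℝ) * ((k : ℝ)⁻¹ * (c ⬝ᵥ y')) := this
          _ = c ⬝ᵥ y' := by rw [← mul_assoc, mul_inv_cancel₀ hkne, one_mul]
      -- step D
      have hD : (k : ℝ) * (1 - (k : ℝ)⁻¹) * (((k : ℝ) + 1) / (k : ℝ) * v)
          = v * ((k:ℝ) - 1) * ((k:ℝ) + 1) / (k:ℝ) := by
        field_simp
      have hcoef : (0:ℝ) ≤ (k : ℝ) * (1 - (k : ℝ)⁻¹) :=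
        mul_nonneg (le_of_lt hkR) (le_of_lt h1t)
      have hmul := mul_le_mul_of_nonneg_left hphik1_le hcoef
      have hfinal : (k : ℝ) * v - (k : ℝ) * (1 - (k : ℝ)⁻¹) * phi A b c ((k : ℝ) + 1)
          ≤ φ1 := by
        have : (k : ℝ) * (v - (1 - (k : ℝ)⁻¹) * phi A b c ((k : ℝ) + 1))
            = (k : ℝ) * v - (k : ℝ) * (1 - (k : ℝ)⁻¹) * phi A b c ((k : ℝ) + 1) := by ring
        linarith [hC]
      have hvk : (k : ℝ) * v - v * ((k:ℝ) - 1) * ((k:ℝ) + 1) / (k:ℝ) = v / (k : ℝ) := by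
        field_simp
        ring
      linarith [hmul, hfinal, hD.symm.le, hD.le]
  have hφ1 : φ1 = v / (k : ℝ) := le_antisymm hφ1_le hφ1_ge
  have hφk : phi A b c (k : ℝ) = (k : ℝ) * φ1 := by
    rw [hφ1, ← hv, mul_div_cancel₀ v hkne]
  have hφK1 : phi A b c ((k : ℝ) + 1) = ((k : ℝ) + 1) * φ1 := by
    apply le_antisymm
    · rw [hφ1]
      calc phi A b c ((k : ℝ) + 1) ≤ ((k : ℝ) + 1) / (k : ℝ) * v := hphik1_le
        _ = ((k : ℝ) + 1) * (v / (k : ℝ)) := by ring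
    · exact hlower ((k : ℝ) + 1) (by linarith) hS1ne
  -- the main linearity claim
  have hk1pos : (0:ℝ) < (k : ℝ) + 1 := by linarith
  have hmain : ∀ lam : ℝ, 0 ≤ lam → lam ≤ (k : ℝ) + 1 →
      phi A b c lam = lam * φ1 := by
    intro lam h0 h1
    rcases eq_or_lt_of_le h0 with h0' | h0'
    · -- lam = 0
      rw [← h0', zero_mul]
      have hfeas0 : PFeasible A b 0 (0 : Fin n → ℝ) := by
        constructor
        · rw [Matrix.mulVec_zero, zero_smul]
        · intro j
          norm_num
      apply le_antisymm
      · have := phi_le hc hfeas0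
        simpa using this
      · apply le_phi ⟨0, hfeas0⟩
        intro x hx
        exact dot_nonneg hc (fun j => (hx.2 j).1)
    · -- 0 < lam
      obtain ⟨s, hs⟩ : ∃ r : ℝ, r = lam / ((k : ℝ) + 1) := ⟨_, rfl⟩
      have hspos : 0 < s := by rw [hs]; exact div_pos h0' hk1pos
      have hsle1 : s ≤ 1 := by rw [hs, div_le_one hk1pos]; exact h1
      have hsk1 : s * ((k : ℝ) + 1) = lam := by
        rw [hs, div_mul_cancel₀ _ (ne_of_gt hk1pos)]
      have hne_lam : ∃ x, PFeasible A b lam x := by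
        refine ⟨s • x₁, ?_⟩
        have := feas_smul hx₁ (le_of_lt hspos) hsle1
        rwa [hsk1] at this
      apply le_antisymm
      · -- upper bound
        have hall : ∀ x', PFeasible A b ((k : ℝ) + 1) x' →
            phi A b c lam / s ≤ c ⬝ᵥ x' := by
          intro x' hx'
          have hfeass : PFeasible A b lam (s • x') := by
            have := feas_smul hx' (le_of_lt hspos) hsle1
            rwa [hsk1] at this
          have := phi_le hc hfeass
          rw [dot_smul'] at this
          rw [div_le_iff₀ hspos]
          linarith [mul_comm (c ⬝ᵥ x') s]
        have := le_phi hS1ne hall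
        rw [div_le_iff₀ hspos] at this
        rw [hφK1] at this
        calc phi A b c lam ≤ ((k : ℝ) + 1) * φ1 * s := this
          _ = lam * φ1 := by rw [← hsk1]; ring
      · -- lower bound
        rcases le_or_gt 1 lam with hge1 | hlt1
        · exact hlower lam hge1 hne_lam
        · -- 0 < lam < 1
          obtain ⟨t, ht⟩ : ∃ r : ℝ, r = (k : ℝ) / ((k : ℝ) + 1 - lam) := ⟨_, rfl⟩
          have hden : (0:ℝ) < (k : ℝ) + 1 - lam := by linarith
          have htpos : 0 < t := by rw [ht]; exact div_pos hkR hden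
          have htlt1 : t < 1 := by
            rw [ht, div_lt_one hden]
            linarith
          have h1t : (0:ℝ) < 1 - t := by linarith
          have htcomb : t * lam + (1 - t) * ((k : ℝ) + 1) = 1 := by
            rw [ht]
            field_simp
            ring
          apply le_phi hne_lam
          intro x hx
          have hineq : ∀ x', PFeasible A b ((k : ℝ) + 1) x' →
              φ1 ≤ t * (c ⬝ᵥ x) + (1 - t) * (c ⬝ᵥ x') := by
            intro x' hx'
            have hcomb := feas_comb hx hx' (le_of_lt htpos) (le_of_lt h1t) (by ring)
            rw [htcomb] at hcomb
            have := phi_le hc hcomb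
            rw [dot_add', dot_smul', dot_smul'] at this
            rw [hφ1def]
            exact this
          have hr : (φ1 - t * (c ⬝ᵥ x)) / (1 - t) ≤ phi A b c ((k : ℝ) + 1) := by
            apply le_phi hS1ne
            intro x' hx'
            rw [div_le_iff₀ h1t]
            have := hineq x' hx'
            linarith [mul_comm (c ⬝ᵥ x') (1 - t)]
          rw [div_le_iff₀ h1t, hφK1] at hr
          -- φ1 - t * cx ≤ (k+1) φ1 (1 - t) ; and t*lam = 1 - (1-t)(k+1)
          have htne : t ≠ 0 := ne_of_gt htpos
          have hkey2 : t * lam * φ1 ≤ t * (c ⬝ᵥ x) := by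
            have e1 : t * lam = 1 - (1 - t) * ((k : ℝ) + 1) := by linarith [htcomb]
            have e3 : t * lam * φ1 = (1 - (1 - t) * ((k : ℝ) + 1)) * φ1 := by rw [e1]
            have e4 : (1 - (1 - t) * ((k : ℝ) + 1)) * φ1
                = φ1 - ((k : ℝ) + 1) * φ1 * (1 - t) := by ring
            rw [e3, e4]
            linarith [hr]
          have hmul := mul_le_mul_of_nonneg_left hkey2 (le_of_lt (inv_pos.mpr htpos))
          have h5 : t⁻¹ * (t * lam * φ1) = lam * φ1 := by
            rw [show t * lam * φ1 = t * (lam * φ1) by ring, ← mul_assoc,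
              inv_mul_cancel₀ htne, one_mul]
          have h6 : t⁻¹ * (t * (c ⬝ᵥ x)) = c ⬝ᵥ x := by
            rw [← mul_assoc, inv_mul_cancel₀ htne, one_mul]
          linarith [hmul, h5.le, h5.ge, h6.le, h6.ge]
  rw [← hφ1def]
  exact ⟨hmain, hφK1, hφk⟩


end PropB1

/-- Under the hypothesis of Proposition B1, the value function is linear on `[0, k+1]`:
`φ(λ) = λ φ(1)`; in particular `φ(k+1) = (k+1) φ(1)` and `φ(k) = k φ(1)`. -/
theorem stmt_12 {m n : ℕ} (A : Matrix (Fin m) (Fin n) ℝ) (b : Fin m → ℝ) (c : Fin n → ℝ)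
    (hb : b ≠ 0) (hc : ∀ j, 0 ≤ c j) (hTU : AugTU A b)
    (k : ℕ) (hk : 0 < k)
    (h : ∀ j : Fin n, ∃ x : Fin n → ℝ,
      IsBinary x ∧ POptimal A b c (k : ℝ) x ∧ x j = 0) :
    (∀ lam : ℝ, 0 ≤ lam → lam ≤ (k : ℝ) + 1 →
      phi A b c lam = lam * phi A b c 1) ∧
    phi A b c ((k : ℝ) + 1) = ((k : ℝ) + 1) * phi A b c 1 ∧
    phi A b c (k : ℝ) = (k : ℝ) * phi A b c 1 :=
  PropB1.main_result A b c hb hc hTU k hk h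
end

section
/- Let x̂ be an optimal solution of P(k) and let J_f = {j : x̂_j > 0}; suppose 0 < x̂_j < 1 for every j ∈ J_f. Then for every real λ ≥ 0, any vector x with x_j = 0 for all j ∉ J_f, 0 ≤ x ≤ 1, and A x = λ b is an optimal solution of P(λ). -/
open Matrix Set

/-- If `P(k)` has an optimal solution `x̂` with every positive coordinate strictly between
`0` and `1`, then every feasible solution of `P(λ)` supported on `J_f = {j : x̂ j > 0}`
is optimal for `P(λ)`. -/
theorem stmt_13 {m n : ℕ} (A : Matrix (Fin m) (Fin n) ℝ) (b : Fin m → ℝ) (c : Fin n → ℝ)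
    (hb : b ≠ 0) (hc : ∀ j, 0 ≤ c j) (hTU : AugTU A b)
    (k : ℕ) (hk : 0 < k)
    (xhat : Fin n → ℝ) (hopt : POptimal A b c (k : ℝ) xhat)
    (hfrac : ∀ j : Fin n, 0 < xhat j → xhat j < 1) :
    ∀ lam : ℝ, 0 ≤ lam → ∀ x : Fin n → ℝ,
      (∀ j : Fin n, ¬ 0 < xhat j → x j = 0) →
      (∀ j, 0 ≤ x j ∧ x j ≤ 1) →
      A.mulVec x = lam • b →
      POptimal A b c lam x := by
  intro lam hlam x hsupp hbnd hAx
  obtain ⟨⟨hAxhat, hxhatbnd⟩, hoptle⟩ := hopt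
  -- choose a positive ε smaller than 1 and all the "slacks" of x̂
  set f : Fin n → ℝ := fun j => if 0 < xhat j then min (xhat j) (1 - xhat j) else 1 with hf
  set s : Finset ℝ := insert 1 (Finset.image f Finset.univ) with hs
  have hsne : s.Nonempty := ⟨1, by simp [hs]⟩
  set ε : ℝ := s.min' hsne with hε
  have hεmem : ε ∈ s := Finset.min'_mem _ _
  have hεpos : 0 < ε := by
    rcases Finset.mem_insert.mp hεmem with h | h
    · rw [h]; norm_num
    · obtain ⟨j, -, hj⟩ := Finset.mem_image.mp h
      have hfj : f j = if 0 < xhat j then min (xhat j) (1 - xhat j) else 1 := rfl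
      rw [← hj, hfj]
      by_cases hp : 0 < xhat j
      · rw [if_pos hp, lt_min_iff]
        exact ⟨hp, by linarith [hfrac j hp]⟩
      · simp [hp]
  have hε1 : ε ≤ 1 := Finset.min'_le _ _ (by simp [hs])
  have hεf : ∀ j, ε ≤ f j := fun j =>
    Finset.min'_le _ _ (Finset.mem_insert_of_mem (Finset.mem_image_of_mem f (Finset.mem_univ j)))
  have hεx : ∀ j, 0 < xhat j → ε ≤ xhat j ∧ xhat j ≤ 1 - ε := by
    intro j hj
    have this : ε ≤ if 0 < xhat j then min (xhat j) (1 - xhat j) else 1 := hεf j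
    rw [if_pos hj, le_min_iff] at this
    exact ⟨this.1, by linarith [this.2]⟩
  refine ⟨⟨hAx, hbnd⟩, ?_⟩
  intro x' ⟨hAx', hbnd'⟩
  -- the perturbed point
  set z : Fin n → ℝ := xhat + ε • (x' - x) with hz
  have hzfeas : PFeasible A b (k : ℝ) z := by
    constructor
    · rw [hz, Matrix.mulVec_add, Matrix.mulVec_smul, Matrix.mulVec_sub, hAx, hAx', hAxhat,
        sub_self, smul_zero, add_zero]
    · intro j
      have hzj : z j = xhat j + ε * (x' j - x j) := by simp [hz]
      by_cases hp : 0 < xhat j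
      · obtain ⟨h1, h2⟩ := hεx j hp
        obtain ⟨hx1, hx2⟩ := hbnd j
        obtain ⟨hx'1, hx'2⟩ := hbnd' j
        constructor
        · rw [hzj]; nlinarith
        · rw [hzj]; nlinarith
      · have hx0 : x j = 0 := hsupp j hp
        have hxh0 : xhat j = 0 := le_antisymm (not_lt.mp hp) (hxhatbnd j).1
        obtain ⟨hx'1, hx'2⟩ := hbnd' j
        constructor
        · rw [hzj, hx0, hxh0]; nlinarith
        · rw [hzj, hx0, hxh0]; nlinarith
  have hle := hoptle z hzfeas
  have hdot : c ⬝ᵥ z = c ⬝ᵥ xhat + ε * (c ⬝ᵥ x' - c ⬝ᵥ x) := by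
    rw [hz, dotProduct_add, dotProduct_smul, dotProduct_sub]
    ring_nf
  rw [hdot] at hle
  nlinarith
end

section
/- Let z be a benchmark-feasible row vector, and let φ_z(λ) denote the optimal value of P(λ) with objective vector z in place of c (same constraints A x = λ b, 0 ≤ x ≤ 1). Then x* is an optimal solution of P_z(k), φ_z(k) = k·φ_z(1), and hence z·x* = k·φ_z(1). -/
open Matrix Set

/-- A row vector `z` is benchmark-feasible for `P(k)` with unique binary optimal
solution `xstar`. -/
def BenchmarkFeasible {m n : ℕ} (A : Matrix (Fin m) (Fin n) ℝ) (b : Fin m → ℝ)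
    (c : Fin n → ℝ) (k : ℕ) (xstar : Fin n → ℝ) (z : Fin n → ℝ) : Prop :=
  (∀ j, xstar j = 1 → c j ≤ z j) ∧
  (∀ j, xstar j = 0 → z j = c j) ∧
  (∀ x : Fin n → ℝ, IsBinary x → PFeasible A b (k : ℝ) x → z ⬝ᵥ xstar ≤ z ⬝ᵥ x) ∧
  (∀ j : Fin n, ∃ x : Fin n → ℝ,
    IsBinary x ∧ PFeasible A b (k : ℝ) x ∧ x j = 0 ∧ z ⬝ᵥ xstar = z ⬝ᵥ x)


lemma exists_unimodular_rows {m : ℕ} {ι : Type*} [Fintype ι] [DecidableEq ι]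
    (M : Matrix (Fin m) ι ℝ)
    (hind : LinearIndependent ℝ (fun j : ι => (fun i => M i j))) :
    ∃ r : ι → Fin m, Function.Injective r ∧ IsUnit (M.submatrix r id) := by
  classical
  -- rows of M span everything
  have hrank : M.rank = Fintype.card ι := by
    rw [Matrix.rank_eq_finrank_span_cols]
    have : (Set.range M.col) = Set.range (fun j : ι => (fun i => M i j)) := by
      rfl
    rw [this]
    exact finrank_span_eq_card hind
  have hrowspan : Submodule.span ℝ (Set.range (fun i : Fin m => (fun j => M i j))) = ⊤ := by
    have h1 : Mᵀ.rank = Fintype.card ι := by rw [Matrix.rank_transpose]; exact hrank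
    rw [Matrix.rank_eq_finrank_span_cols] at h1
    have : (Set.range Mᵀ.col) = Set.range (fun i : Fin m => (fun j => M i j)) := rfl
    rw [this] at h1
    apply Submodule.eq_top_of_finrank_eq
    rw [h1, Module.finrank_pi]
  obtain ⟨tset, htsub, htspan, htli⟩ :=
    exists_linearIndependent ℝ (Set.range (fun i : Fin m => (fun j => M i j)))
  rw [hrowspan] at htspan
  have htfin : tset.Finite := htli.setFinite
  haveI : Fintype tset := htfin.fintype
  have hbasis : Module.Basis tset ℝ (ι → ℝ) := Module.Basis.mk htli (by
    rw [Subtype.range_coe_subtype, Set.setOf_mem_eq, htspan])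
  have hcard : Fintype.card tset = Fintype.card ι := by
    have := Module.finrank_eq_card_basis hbasis
    rw [Module.finrank_pi] at this
    simp at this
    rw [← Nat.card_eq_fintype_card, Nat.card_coe_set_eq]
    omega
  let e : ι ≃ tset := Fintype.equivOfCardEq hcard.symm
  have hchoice : ∀ v : tset, ∃ i : Fin m, (fun j => M i j) = (v : ι → ℝ) := fun v => htsub v.2
  choose g hg using hchoice
  refine ⟨fun j => g (e j), ?_, ?_⟩
  · intro j1 j2 h
    have : ((e j1 : ι → ℝ)) = ((e j2 : ι → ℝ)) := by
      rw [← hg (e j1), ← hg (e j2)]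
      simp only at h
      rw [h]
    exact e.injective (Subtype.ext this)
  · rw [← Matrix.linearIndependent_rows_iff_isUnit]
    have : (M.submatrix (fun j => g (e j)) id).row
        = (fun v : tset => (v : ι → ℝ)) ∘ e := by
      funext i; ext j
      have := congrFun (hg (e i)) j
      simpa [Matrix.submatrix_apply] using this
    rw [this]
    exact htli.comp e e.injective

lemma tu_entry_int' {m n : Type*} {A : Matrix m n ℝ} (hA : A.IsTotallyUnimodular)
    (i : m) (j : n) : ∃ q : ℤ, A i j = q := by
  obtain ⟨s, hs⟩ := hA.apply i j
  exact ⟨(s : ℤ), by rw [← hs]; cases s <;> simp⟩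

lemma indep_integral {m n : ℕ} {A : Matrix (Fin m) (Fin n) ℝ}
    (hTUA : A.IsTotallyUnimodular)
    (F : Finset (Fin n))
    (hind : LinearIndependent ℝ (fun j : F => (fun i => A i (j : Fin n))))
    (x : Fin n → ℝ) (hAx : ∀ i : Fin m, ∃ q : ℤ, (∑ j : F, A i j * x j) = q) :
    ∀ j : F, ∃ q : ℤ, x (j : Fin n) = q := by
  classical
  set M : Matrix (Fin m) F ℝ := A.submatrix id (fun j : F => (j : Fin n)) with hM
  obtain ⟨r, hrinj, hunit⟩ := exists_unimodular_rows M hind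
  set N : Matrix F F ℝ := M.submatrix r id with hN
  -- N has det ±1
  have hdet0 : N.det ≠ 0 := by
    intro h
    rw [Matrix.isUnit_iff_isUnit_det, h] at hunit
    simp at hunit
  have hdetTU : N.det ∈ Set.range SignType.cast := by
    let e := (Fintype.equivFin F).symm
    have := hTUA (Fintype.card F) (fun i => r (e i)) (fun i => ((e i : F) : Fin n))
      (hrinj.comp e.injective) (Subtype.coe_injective.comp e.injective)
    have heq : (A.submatrix (fun i => r (e i)) (fun i => ((e i : F) : Fin n)))
        = N.submatrix e e := by
      ext i j; simp [hN, hM]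
    rwa [heq, Matrix.det_submatrix_equiv_self] at this
  -- integer lift of N
  have hZ : ∀ i j : F, ∃ q : ℤ, N i j = q := fun i j => tu_entry_int' hTUA _ _
  choose Nt hNt using hZ
  have hNmap : N = (Int.castRingHom ℝ).mapMatrix (Matrix.of Nt) := by
    ext i j; simp [hNt i j]
  have hdetNt : IsUnit (Matrix.of Nt).det := by
    obtain ⟨s, hs⟩ := hdetTU
    have hcast : ((Matrix.of Nt).det : ℝ) = N.det := by
      rw [hNmap, ← RingHom.map_det]; rfl
    rw [Int.isUnit_iff]
    cases s with
    | zero => exfalso; apply hdet0; rw [← hs]; simp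
    | pos =>
      left
      have : ((Matrix.of Nt).det : ℝ) = ((1 : ℤ) : ℝ) := by rw [hcast, ← hs]; simp
      exact_mod_cast this
    | neg =>
      right
      have : ((Matrix.of Nt).det : ℝ) = ((-1 : ℤ) : ℝ) := by rw [hcast, ← hs]; simp
      exact_mod_cast this
  -- inverse over ℤ
  set L : Matrix F F ℤ := (Matrix.of Nt)⁻¹ with hL
  have hLN : L * (Matrix.of Nt) = 1 := Matrix.nonsing_inv_mul _ hdetNt
  -- the key equation
  choose q hq using hAx
  set v : F → ℝ := fun j => x (j : Fin n) with hv
  have hNv : N.mulVec v = fun j0 => ((q (r j0) : ℤ) : ℝ) := by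
    funext j0
    rw [← hq (r j0)]
    simp [Matrix.mulVec, dotProduct, hN, hM, hv]
  have hvL : v = (L.map (Int.cast : ℤ → ℝ)).mulVec (N.mulVec v) := by
    rw [Matrix.mulVec_mulVec]
    have : L.map (Int.cast : ℤ → ℝ) * N = 1 := by
      rw [hNmap]
      have : L.map (Int.cast : ℤ → ℝ) = (Int.castRingHom ℝ).mapMatrix L := rfl
      rw [this, ← RingHom.map_mul ((Int.castRingHom ℝ).mapMatrix) L (Matrix.of Nt), hLN]
      simp
    rw [this, Matrix.one_mulVec]
  intro j
  refine ⟨∑ i : F, L j i * q (r i), ?_⟩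
  have := congrFun hvL j
  rw [hNv] at this
  rw [hv] at this
  simp only at this
  rw [this]
  simp only [Matrix.mulVec, dotProduct, Matrix.map_apply]
  push_cast
  rfl

lemma rounding {m n : ℕ} (A : Matrix (Fin m) (Fin n) ℝ) (b : Fin m → ℝ)
    (hTUA : A.IsTotallyUnimodular)
    (hbZ : ∀ i, ∃ q : ℤ, b i = q)
    (k : ℕ) (w : Fin n → ℝ) :
    ∀ x : Fin n → ℝ, PFeasible A b (k : ℝ) x →
      ∃ y, IsBinary y ∧ PFeasible A b (k : ℝ) y ∧ w ⬝ᵥ y ≤ w ⬝ᵥ x := by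
  classical
  choose Ab hAb using (fun i j => tu_entry_int' hTUA i j)
  choose bt hbt using hbZ
  suffices H : ∀ N : ℕ, ∀ x : Fin n → ℝ, PFeasible A b (k : ℝ) x →
      (Finset.univ.filter (fun j => x j ≠ 0 ∧ x j ≠ 1)).card ≤ N →
      ∃ y, IsBinary y ∧ PFeasible A b (k : ℝ) y ∧ w ⬝ᵥ y ≤ w ⬝ᵥ x by
    intro x hx
    exact H _ x hx le_rfl
  intro N
  induction N with
  | zero =>
    intro x hx hcard
    refine ⟨x, ?_, hx, le_rfl⟩
    intro j
    by_contra h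
    push_neg at h
    have hj : j ∈ Finset.univ.filter (fun j => x j ≠ 0 ∧ x j ≠ 1) := by
      simp [h.1, h.2]
    have := Finset.card_pos.mpr ⟨j, hj⟩
    omega
  | succ N ih =>
    intro x hx hcard
    set F := Finset.univ.filter (fun j => x j ≠ 0 ∧ x j ≠ 1) with hF
    by_cases hFe : F = ∅
    · refine ⟨x, ?_, hx, le_rfl⟩
      intro j
      by_contra h
      push_neg at h
      have hj : j ∈ F := by simp [hF, h.1, h.2]
      rw [hFe] at hj
      exact absurd hj (Finset.notMem_empty j)
    have hFne : F.Nonempty := Finset.nonempty_of_ne_empty hFe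
    have hxFrac : ∀ j ∈ F, 0 < x j ∧ x j < 1 := by
      intro j hj
      rw [hF, Finset.mem_filter] at hj
      have h0 := (hx.2 j).1
      have h1 := (hx.2 j).2
      exact ⟨lt_of_le_of_ne h0 (Ne.symm hj.2.1), lt_of_le_of_ne h1 hj.2.2⟩
    by_cases hind : LinearIndependent ℝ (fun j : F => (fun i => A i (j : Fin n)))
    · -- independent: all coordinates in F are integral, contradiction
      exfalso
      have hAx : ∀ i : Fin m, ∃ q : ℤ, (∑ j : F, A i j * x j) = q := by
        intro i
        have hrow : ∑ j, A i j * x j = (k : ℝ) * b i := by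
          have := congrFun hx.1 i
          simpa [Matrix.mulVec, dotProduct] using this
        have hsplit := Finset.sum_filter_add_sum_filter_not Finset.univ
          (fun j => x j ≠ 0 ∧ x j ≠ 1) (fun j => A i j * x j)
        refine ⟨(k : ℤ) * bt i -
          ∑ j ∈ Finset.univ.filter (fun j => ¬(x j ≠ 0 ∧ x j ≠ 1)),
            (if x j = 1 then Ab i j else 0), ?_⟩
        have hcompl : ∑ j ∈ Finset.univ.filter (fun j => ¬(x j ≠ 0 ∧ x j ≠ 1)),
            A i j * x j
            = ((∑ j ∈ Finset.univ.filter (fun j => ¬(x j ≠ 0 ∧ x j ≠ 1)),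
              (if x j = 1 then Ab i j else 0) : ℤ) : ℝ) := by
          push_cast
          refine Finset.sum_congr rfl ?_
          intro j hj
          rw [Finset.mem_filter] at hj
          have hj' := hj.2
          push_neg at hj'
          by_cases h1 : x j = 1
          · simp [h1, hAb]
          · have h0 : x j = 0 := by
              by_contra h0
              exact h1 (hj' h0)
            simp [h0, h1]
        have hsumF : ∑ j : F, A i (j : Fin n) * x (j : Fin n) = ∑ j ∈ F, A i j * x j :=
          F.sum_coe_sort (fun j => A i j * x j)
        rw [hsumF]
        have : ∑ j ∈ F, A i j * x j = (k : ℝ) * b i -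
            ∑ j ∈ Finset.univ.filter (fun j => ¬(x j ≠ 0 ∧ x j ≠ 1)), A i j * x j := by
          rw [hF]
          linarith [hsplit, hrow]
        rw [this, hcompl, hbt i]
        push_cast
        ring
      obtain ⟨j0, hj0⟩ := hFne
      obtain ⟨q, hq⟩ := indep_integral hTUA F hind x hAx ⟨j0, hj0⟩
      have hfrac := hxFrac j0 hj0
      simp only at hq
      rw [hq] at hfrac
      have h0 : (0 : ℤ) < q := by exact_mod_cast hfrac.1
      have h1 : q < 1 := by exact_mod_cast hfrac.2
      omega
    · -- dependent: move along a kernel direction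
      obtain ⟨g, hgsum, j1, hgj1⟩ := Fintype.not_linearIndependent_iff.mp hind
      obtain ⟨d, hdsupp, hdne, hAd, hwd⟩ : ∃ d : Fin n → ℝ, (∀ j, j ∉ F → d j = 0) ∧
          (∃ j, d j ≠ 0) ∧ A.mulVec d = 0 ∧ w ⬝ᵥ d ≤ 0 := by
        set d0 : Fin n → ℝ := fun j => if h : j ∈ F then g ⟨j, h⟩ else 0 with hd0
        have hsupp0 : ∀ j, j ∉ F → d0 j = 0 := by
          intro j hj; simp [hd0, hj]
        have hne0 : ∃ j, d0 j ≠ 0 := by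
          refine ⟨(j1 : Fin n), ?_⟩
          simp only [hd0]
          rw [dif_pos j1.2]
          simpa using hgj1
        have hAd0 : A.mulVec d0 = 0 := by
          funext i
          have hrow := congrFun hgsum i
          simp only [Finset.sum_apply, Pi.smul_apply, smul_eq_mul, Pi.zero_apply] at hrow
          have : (A.mulVec d0) i = ∑ j : F, g j * A i (j : Fin n) := by
            simp only [Matrix.mulVec, dotProduct]
            rw [← Finset.sum_filter_add_sum_filter_not Finset.univ (fun j => j ∈ F)
              (fun j => A i j * d0 j)]
            have hz : ∑ j ∈ Finset.univ.filter (fun j => ¬ j ∈ F), A i j * d0 j = 0 := by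
              apply Finset.sum_eq_zero
              intro j hj
              rw [Finset.mem_filter] at hj
              rw [hsupp0 j hj.2, mul_zero]
            rw [hz, add_zero]
            have : Finset.univ.filter (fun j => j ∈ F) = F := by
              ext j; simp
            rw [this, ← F.sum_coe_sort (fun j => A i j * d0 j)]
            refine Finset.sum_congr rfl ?_
            intro j _
            have : d0 (j : Fin n) = g j := by
              simp only [hd0]
              rw [dif_pos j.2]
            rw [this]; ring
          rw [this, Pi.zero_apply, ← hrow]
        rcases le_or_gt (w ⬝ᵥ d0) 0 with hle | hlt
        · exact ⟨d0, hsupp0, hne0, hAd0, hle⟩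
        · refine ⟨-d0, fun j hj => by simp [hsupp0 j hj], ?_,
            by rw [Matrix.mulVec_neg, hAd0, neg_zero], ?_⟩
          · obtain ⟨j, hj⟩ := hne0
            exact ⟨j, by simpa using hj⟩
          · rw [dotProduct_neg]
            linarith
      -- step size
      set S := Finset.univ.filter (fun j => d j ≠ 0) with hS
      have hSne : S.Nonempty := by
        obtain ⟨j, hj⟩ := hdne
        exact ⟨j, by simp [hS, hj]⟩
      have hSF : ∀ j ∈ S, j ∈ F := by
        intro j hj
        rw [hS, Finset.mem_filter] at hj
        by_contra hjF
        exact hj.2 (hdsupp j hjF)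
      set bound : Fin n → ℝ := fun j => if 0 < d j then (1 - x j) / d j else x j / (- d j)
        with hbound
      set t := S.inf' hSne bound with ht
      have htpos : 0 < t := by
        rw [ht, Finset.lt_inf'_iff]
        intro j hj
        have hfr := hxFrac j (hSF j hj)
        rw [hS, Finset.mem_filter] at hj
        by_cases hdj : 0 < d j
        · simp only [hbound, if_pos hdj]
          exact div_pos (by linarith [hfr.2]) hdj
        · have hdj' : d j < 0 := lt_of_le_of_ne (not_lt.mp hdj) hj.2
          simp only [hbound, if_neg hdj]
          exact div_pos hfr.1 (by linarith)
      have htle : ∀ j ∈ S, t ≤ bound j := fun j hj => Finset.inf'_le bound hj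
      set x' : Fin n → ℝ := x + t • d with hx'
      have hbounds : ∀ j, 0 ≤ x' j ∧ x' j ≤ 1 := by
        intro j
        by_cases hdj0 : d j = 0
        · simp [hx', hdj0]; exact hx.2 j
        have hjS : j ∈ S := by simp [hS, hdj0]
        have hb := htle j hjS
        have hxj := hx.2 j
        rcases lt_or_gt_of_ne hdj0 with hneg | hpos
        · -- d j < 0
          constructor
          · have hb' : t ≤ x j / (- d j) := by
              simpa [hbound, not_lt.mpr (le_of_lt hneg), not_lt_of_gt hneg] using hb
            have : t * (- d j) ≤ x j := by
              rw [← le_div_iff₀ (by linarith)] at *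
              exact hb'
            simp only [hx', Pi.add_apply, Pi.smul_apply, smul_eq_mul]
            nlinarith
          · have : t * d j ≤ 0 := by nlinarith
            simp only [hx', Pi.add_apply, Pi.smul_apply, smul_eq_mul]
            linarith [hxj.2]
        · -- d j > 0
          constructor
          · have : 0 ≤ t * d j := by positivity
            simp only [hx', Pi.add_apply, Pi.smul_apply, smul_eq_mul]
            linarith [hxj.1]
          · have hb' : t ≤ (1 - x j) / d j := by
              simpa [hbound, hpos] using hb
            have : t * d j ≤ 1 - x j := by
              rw [div_eq_mul_inv] at hb'
              calc t * d j ≤ ((1 - x j) * (d j)⁻¹) * d j := by nlinarith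
                _ = 1 - x j := by field_simp
            simp only [hx', Pi.add_apply, Pi.smul_apply, smul_eq_mul]
            linarith
      have hfeas' : PFeasible A b (k : ℝ) x' := by
        constructor
        · rw [hx', Matrix.mulVec_add, Matrix.mulVec_smul, hAd, smul_zero, add_zero]
          exact hx.1
        · exact hbounds
      -- some coordinate becomes integral
      obtain ⟨j0, hj0S, hj0min⟩ := Finset.exists_mem_eq_inf' hSne bound
      have hj0F : j0 ∈ F := hSF j0 hj0S
      have hdj0 : d j0 ≠ 0 := by
        rw [hS, Finset.mem_filter] at hj0S
        exact hj0S.2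
      have hx'j0 : x' j0 = 0 ∨ x' j0 = 1 := by
        rcases lt_or_gt_of_ne hdj0 with hneg | hpos
        · left
          have hbj0 : bound j0 = x j0 / (- d j0) := by
            simp [hbound, not_lt_of_gt hneg]
          simp only [hx', Pi.add_apply, Pi.smul_apply, smul_eq_mul]
          rw [← ht] at hj0min
          rw [hj0min, hbj0]
          have : x j0 / -d j0 * d j0 = -(x j0) := by
            rw [div_neg, neg_mul, div_mul_cancel₀ _ hdj0]
          rw [this]; ring
        · right
          have hbj0 : bound j0 = (1 - x j0) / d j0 := by
            simp [hbound, hpos]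
          simp only [hx', Pi.add_apply, Pi.smul_apply, smul_eq_mul]
          rw [← ht] at hj0min
          rw [hj0min, hbj0]
          rw [div_mul_cancel₀ _ hdj0]; ring
      have hsubset : Finset.univ.filter (fun j => x' j ≠ 0 ∧ x' j ≠ 1) ⊆ F.erase j0 := by
        intro j hj
        rw [Finset.mem_filter] at hj
        rw [Finset.mem_erase]
        constructor
        · intro hjj0
          rw [hjj0] at hj
          rcases hx'j0 with h | h
          · exact hj.2.1 h
          · exact hj.2.2 h
        · by_contra hjF
          have hd0 : d j = 0 := hdsupp j hjF
          have : x' j = x j := by simp [hx', hd0]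
          rw [this] at hj
          apply hjF
          rw [hF, Finset.mem_filter]
          exact ⟨Finset.mem_univ j, hj.2⟩
      have hcard' : (Finset.univ.filter (fun j => x' j ≠ 0 ∧ x' j ≠ 1)).card ≤ N := by
        have h1 := Finset.card_le_card hsubset
        have h2 : (F.erase j0).card = F.card - 1 := Finset.card_erase_of_mem hj0F
        have h3 : 0 < F.card := Finset.card_pos.mpr hFne
        omega
      obtain ⟨y, hybin, hyfeas, hwy⟩ := ih x' hfeas' hcard'
      refine ⟨y, hybin, hyfeas, ?_⟩
      have hdot : w ⬝ᵥ x' = w ⬝ᵥ x + t * (w ⬝ᵥ d) := by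
        simp [hx', dotProduct_add, dotProduct_smul]
      have : w ⬝ᵥ x' ≤ w ⬝ᵥ x := by nlinarith
      linarith

lemma dot_add_smul {n : ℕ} (z u v : Fin n → ℝ) (t : ℝ) :
    z ⬝ᵥ (u + t • v) = z ⬝ᵥ u + t * (z ⬝ᵥ v) := by
  rw [dotProduct_add, dotProduct_smul, smul_eq_mul]

lemma mulVec_add_smul {m n : ℕ} (A : Matrix (Fin m) (Fin n) ℝ) (u v : Fin n → ℝ) (t : ℝ) :
    A.mulVec (u + t • v) = A.mulVec u + t • A.mulVec v := by
  rw [Matrix.mulVec_add, Matrix.mulVec_smul]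

lemma dot_sum {n : ℕ} (v : Fin n → ℝ) (f : Fin n → Fin n → ℝ) :
    v ⬝ᵥ (∑ j, f j) = ∑ j, v ⬝ᵥ f j := by
  simp only [dotProduct, Finset.sum_apply, Finset.mul_sum]
  rw [Finset.sum_comm]

/-- For a benchmark-feasible `z`: `x*` is optimal for `P_z(k)`, `φ_z(k) = k φ_z(1)`, and
hence `z·x* = k φ_z(1)`. -/
theorem stmt_15 {m n : ℕ} (A : Matrix (Fin m) (Fin n) ℝ) (b : Fin m → ℝ) (c : Fin n → ℝ)
    (hb : b ≠ 0) (hc : ∀ j, 0 ≤ c j) (hTU : AugTU A b)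
    (k : ℕ) (hk : 0 < k)
    (xstar : Fin n → ℝ) (hopt : POptimal A b c (k : ℝ) xstar)
    (huniq : ∀ x : Fin n → ℝ, POptimal A b c (k : ℝ) x → x = xstar)
    (hbin : IsBinary xstar)
    (z : Fin n → ℝ) (hz : BenchmarkFeasible A b c k xstar z) :
    POptimal A b z (k : ℝ) xstar ∧
    phi A b z (k : ℝ) = (k : ℝ) * phi A b z 1 ∧
    z ⬝ᵥ xstar = (k : ℝ) * phi A b z 1 := by
  classical
  obtain ⟨hz1, hz2, hz3, hz4⟩ := hz
  have hkR : (0:ℝ) < (k:ℝ) := by exact_mod_cast hk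
  have hkR1 : (1:ℝ) ≤ (k:ℝ) := by exact_mod_cast hk
  -- A is TU and b is integral
  have hTUA : A.IsTotallyUnimodular := by
    have h := hTU.submatrix (id : Fin m → Fin m) (Sum.inl : Fin n → Fin n ⊕ Unit)
    have he : ((Matrix.fromCols A (Matrix.of fun i (_ : Unit) => b i)).submatrix id
        (Sum.inl : Fin n → Fin n ⊕ Unit)) = A := by
      ext i j
      simp [Matrix.fromCols]
    rwa [he] at h
  have hbZ : ∀ i, ∃ q : ℤ, b i = q := by
    intro i
    have h := tu_entry_int' hTU i (Sum.inr ())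
    simpa [Matrix.fromCols] using h
  -- Goal 1 : xstar is z-optimal
  have hGoal1 : POptimal A b z (k : ℝ) xstar := by
    refine ⟨hopt.1, ?_⟩
    intro x' hx'
    obtain ⟨y, hybin, hyfeas, hwy⟩ := rounding A b hTUA hbZ k z x' hx'
    exact le_trans (hz3 y hybin hyfeas) hwy
  -- n is positive
  have hn : 0 < n := by
    rcases Nat.eq_zero_or_pos n with h0 | h
    · exfalso
      apply hb
      funext i
      have h1 := congrFun hopt.1.1 i
      subst h0
      simp [Matrix.mulVec, dotProduct] at h1
      show b i = 0
      rcases h1 with h | h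
      · exact absurd h (by omega)
      · exact h
    · exact h
  -- the average point xhat
  choose xb hxb using hz4
  set xhat : Fin n → ℝ := (n:ℝ)⁻¹ • ∑ j, xb j with hxhat
  have hnR : (0:ℝ) < (n:ℝ) := by exact_mod_cast hn
  have hxhatA : A.mulVec xhat = (k : ℝ) • b := by
    rw [hxhat, Matrix.mulVec_smul]
    have hsum : A.mulVec (∑ j, xb j) = ∑ j, A.mulVec (xb j) := by
      funext i
      simp only [Matrix.mulVec, dotProduct, Finset.sum_apply, Finset.mul_sum]
      rw [Finset.sum_comm]
    rw [hsum]
    have : ∀ j : Fin n, A.mulVec (xb j) = (k : ℝ) • b := fun j => (hxb j).2.1.1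
    rw [Finset.sum_congr rfl (fun j _ => this j)]
    rw [Finset.sum_const, Finset.card_univ, Fintype.card_fin,
      ← Nat.cast_smul_eq_nsmul ℝ, smul_smul, inv_mul_cancel₀ (ne_of_gt hnR), one_smul]
  have hxhat_dot : z ⬝ᵥ xhat = z ⬝ᵥ xstar := by
    rw [hxhat, dotProduct_smul, dot_sum]
    have : ∀ j : Fin n, z ⬝ᵥ xb j = z ⬝ᵥ xstar := fun j => ((hxb j).2.2.2).symm
    rw [Finset.sum_congr rfl (fun j _ => this j)]
    rw [Finset.sum_const, Finset.card_univ, Fintype.card_fin]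
    simp only [smul_eq_mul, nsmul_eq_mul]
    field_simp
  have hxhat_nonneg : ∀ i, 0 ≤ xhat i := by
    intro i
    rw [hxhat]
    simp only [Pi.smul_apply, Finset.sum_apply, smul_eq_mul]
    apply mul_nonneg (by positivity)
    apply Finset.sum_nonneg
    intro j _
    exact ((hxb j).2.1.2 i).1
  have hxhat_lt : ∀ i, xhat i < 1 := by
    intro i
    rw [hxhat]
    simp only [Pi.smul_apply, Finset.sum_apply, smul_eq_mul]
    have hsum_lt : ∑ j, xb j i < (n : ℝ) := by
      have h1 : ∑ j, xb j i = ∑ j ∈ Finset.univ.erase i, xb j i := by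
        rw [← Finset.sum_erase_add Finset.univ _ (Finset.mem_univ i), (hxb i).2.2.1, add_zero]
      rw [h1]
      calc ∑ j ∈ Finset.univ.erase i, xb j i
          ≤ ∑ j ∈ Finset.univ.erase i, 1 := by
            apply Finset.sum_le_sum
            intro j _
            exact ((hxb j).2.1.2 i).2
        _ = ((Finset.univ.erase i).card : ℝ) := by rw [Finset.sum_const]; simp
        _ < (n : ℝ) := by
            rw [Finset.card_erase_of_mem (Finset.mem_univ i), Finset.card_univ,
              Fintype.card_fin]
            have h1 : ((n - 1 : ℕ) : ℝ) = (n : ℝ) - 1 := by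
              push_cast [Nat.cast_sub (by omega : 1 ≤ n)]
              ring
            rw [h1]
            linarith
    calc (n:ℝ)⁻¹ * ∑ j, xb j i < (n:ℝ)⁻¹ * (n:ℝ) := by
          apply mul_lt_mul_of_pos_left hsum_lt (by positivity)
      _ = 1 := by field_simp
  -- every feasible solution of P(1) has z-value at least (z xstar)/k
  have hP1lower : ∀ y, PFeasible A b 1 y → (k:ℝ)⁻¹ * (z ⬝ᵥ xstar) ≤ z ⬝ᵥ y := by
    intro y hy
    set d : Fin n → ℝ := y - (k:ℝ)⁻¹ • xhat with hd
    have hAd : A.mulVec d = 0 := by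
      rw [hd, Matrix.mulVec_sub, Matrix.mulVec_smul, hxhatA, hy.1, one_smul, smul_smul,
        inv_mul_cancel₀ (ne_of_gt hkR), one_smul, sub_self]
    set bound : Fin n → ℝ := fun j =>
      if 0 < d j then (1 - xhat j) / d j else if d j < 0 then xhat j / (- d j) else 1
      with hbound
    have huniv_ne : (Finset.univ : Finset (Fin n)).Nonempty := ⟨⟨0, hn⟩, Finset.mem_univ _⟩
    set t := Finset.univ.inf' huniv_ne bound with ht
    have htpos : 0 < t := by
      rw [ht, Finset.lt_inf'_iff]
      intro j _
      by_cases hdj : 0 < d j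
      · simp only [hbound, if_pos hdj]
        exact div_pos (by linarith [hxhat_lt j]) hdj
      · by_cases hdj' : d j < 0
        · simp only [hbound, if_neg hdj, if_pos hdj']
          have hxpos : 0 < xhat j := by
            have heq : d j = y j - (k:ℝ)⁻¹ * xhat j := by simp [hd]
            have hyj := (hy.2 j).1
            by_contra hle
            push_neg at hle
            have hx0 : xhat j = 0 := le_antisymm hle (hxhat_nonneg j)
            rw [heq, hx0, mul_zero, sub_zero] at hdj'
            linarith
          exact div_pos hxpos (by linarith)
        · simp only [hbound, if_neg hdj, if_neg hdj']
          exact one_pos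
    have htle : ∀ j, t ≤ bound j := fun j => Finset.inf'_le bound (Finset.mem_univ j)
    set p : Fin n → ℝ := xhat + t • d with hp
    have hpfeas : PFeasible A b (k : ℝ) p := by
      constructor
      · rw [hp, mulVec_add_smul, hxhatA, hAd, smul_zero, add_zero]
      · intro j
        have hb := htle j
        by_cases hdj : 0 < d j
        · have hb' : t ≤ (1 - xhat j) / d j := by simpa [hbound, hdj] using hb
          have h2 : t * d j ≤ 1 - xhat j := by
            rw [le_div_iff₀ hdj] at hb'
            linarith
          constructor
          · simp only [hp, Pi.add_apply, Pi.smul_apply, smul_eq_mul]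
            nlinarith [hxhat_nonneg j]
          · simp only [hp, Pi.add_apply, Pi.smul_apply, smul_eq_mul]
            linarith
        · by_cases hdj' : d j < 0
          · have hb' : t ≤ xhat j / (- d j) := by simpa [hbound, hdj, hdj'] using hb
            have h2 : t * (- d j) ≤ xhat j := by
              rw [le_div_iff₀ (by linarith)] at hb'
              linarith
            constructor
            · simp only [hp, Pi.add_apply, Pi.smul_apply, smul_eq_mul]
              nlinarith
            · simp only [hp, Pi.add_apply, Pi.smul_apply, smul_eq_mul]
              nlinarith [hxhat_lt j]
          · have hdj0 : d j = 0 := le_antisymm (not_lt.mp hdj) (not_lt.mp hdj')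
            simp only [hp, Pi.add_apply, Pi.smul_apply, smul_eq_mul, hdj0, mul_zero, add_zero]
            exact ⟨hxhat_nonneg j, le_of_lt (hxhat_lt j)⟩
    have hzp : z ⬝ᵥ xstar ≤ z ⬝ᵥ p := hGoal1.2 p hpfeas
    have hzp' : z ⬝ᵥ p = z ⬝ᵥ xhat + t * (z ⬝ᵥ d) := by
      rw [hp, dot_add_smul]
    have hzd : 0 ≤ z ⬝ᵥ d := by
      rw [hzp', hxhat_dot] at hzp
      nlinarith
    have hzd' : z ⬝ᵥ d = z ⬝ᵥ y - (k:ℝ)⁻¹ * (z ⬝ᵥ xstar) := by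
      rw [hd, dotProduct_sub, dotProduct_smul, smul_eq_mul, hxhat_dot]
    rw [hzd'] at hzd
    linarith
  -- phi at k
  have hmemk : z ⬝ᵥ xstar ∈ (fun x => z ⬝ᵥ x) '' {x | PFeasible A b (k:ℝ) x} :=
    ⟨xstar, hopt.1, rfl⟩
  have hphik : phi A b z (k : ℝ) = z ⬝ᵥ xstar := by
    unfold phi
    apply le_antisymm
    · refine csInf_le ⟨z ⬝ᵥ xstar, ?_⟩ hmemk
      rintro v ⟨x', hx', rfl⟩
      exact hGoal1.2 x' hx'
    · apply le_csInf ⟨_, hmemk⟩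
      rintro v ⟨x', hx', rfl⟩
      exact hGoal1.2 x' hx'
  -- phi at 1
  have hkinv : (k:ℝ)⁻¹ ≤ 1 := by
    have h1 : (k:ℝ)⁻¹ * (k:ℝ) = 1 := inv_mul_cancel₀ (ne_of_gt hkR)
    nlinarith [inv_pos.mpr hkR]
  have hy1 : PFeasible A b 1 ((k:ℝ)⁻¹ • xstar) := by
    constructor
    · rw [Matrix.mulVec_smul, hopt.1.1, smul_smul, inv_mul_cancel₀ (ne_of_gt hkR), one_smul]
    · intro j
      have h := hopt.1.2 j
      constructor
      · simp only [Pi.smul_apply, smul_eq_mul]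
        exact mul_nonneg (by positivity) h.1
      · simp only [Pi.smul_apply, smul_eq_mul]
        calc (k:ℝ)⁻¹ * xstar j ≤ 1 * xstar j :=
              mul_le_mul_of_nonneg_right hkinv h.1
          _ ≤ 1 := by rw [one_mul]; exact h.2
  have hdot1 : (fun x => z ⬝ᵥ x) ((k:ℝ)⁻¹ • xstar) = (k:ℝ)⁻¹ * (z ⬝ᵥ xstar) := by
    simp only
    rw [dotProduct_smul, smul_eq_mul]
  have hmem1 : (k:ℝ)⁻¹ * (z ⬝ᵥ xstar) ∈ (fun x => z ⬝ᵥ x) '' {x | PFeasible A b 1 x} :=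
    ⟨_, hy1, hdot1⟩
  have hphi1 : phi A b z 1 = (k:ℝ)⁻¹ * (z ⬝ᵥ xstar) := by
    unfold phi
    apply le_antisymm
    · refine csInf_le ⟨(k:ℝ)⁻¹ * (z ⬝ᵥ xstar), ?_⟩ hmem1
      rintro v ⟨y, hyf, rfl⟩
      exact hP1lower y hyf
    · apply le_csInf ⟨_, hmem1⟩
      rintro v ⟨y, hyf, rfl⟩
      exact hP1lower y hyf
  refine ⟨hGoal1, ?_, ?_⟩
  · rw [hphik, hphi1, ← mul_assoc, mul_inv_cancel₀ (ne_of_gt hkR), one_mul]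
  · rw [hphi1, ← mul_assoc, mul_inv_cancel₀ (ne_of_gt hkR), one_mul]
end
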